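/- arXiv:1305.1074 — 7 statements merged into one kernel-verified Lean document; each statement's English description precedes it below -/
import Mathlib

section
/- Let k be an even integer and m a natural number with -m ≡ 0 or 1 mod 4. Write -m = D₀ f² where D₀ is the discriminant of ℚ(√-m) and f a positive integer. Define h_{k-1/2}(m) = h_{k-1/2}(|D₀|) · m^{k-3/2} · Σ_{d|f} μ(d) (D₀/d) d^{1-k} σ_{3-2k}(f/d), and g_k(m) = Σ_{d|f} μ(d) h_{k-1/2}(m/d²). Then g_k(m) = h_{k-1/2}(|D₀|) |D₀|^{k-3/2} · ∏_{q | f} ( q^{(2k-3)·ord_q(f)} − (D₀/q) q^{k-2+(2k-3)(ord_q(f)-1)} ), where the product is over primes q dividing f. -/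
/-!
Cohen's formula reads `h_{k-1/2}(|D₀| n²) = c |D₀|^{k-3/2} F(n)` with
`F = ((μ χ id^{1-k}) * ζ * id^{3-2k}) · id^{2k-3}`, where `*` is Dirichlet convolution and `·`
the pointwise product. Pointwise multiplication by the completely multiplicative `id^{2k-3}`
distributes over `*`, so `F = (μ χ id^{k-2}) * id^{2k-3} * ζ`, and Möbius inversion gives
`g = μ * F = (μ χ id^{k-2}) * id^{2k-3}`. This is multiplicative, and at `p^a` only the divisors
`1` and `p` contribute to the twisted Möbius factor, which yields the Euler factor.
-/

open ArithmeticFunction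
open scoped ArithmeticFunction.Moebius ArithmeticFunction.zeta

namespace ArithmeticFunction

theorem mul_apply_eq_sum_divisors {R : Type*} [Semiring R] (F G : ArithmeticFunction R) (n : ℕ) :
    (F * G) n = ∑ d ∈ n.divisors, F d * G (n / d) :=
  Nat.sum_divisorsAntidiagonal fun x y => F x * G y

section CompletelyMultiplicative

variable {R : Type*} [CommSemiring R]

def IsCompletelyMultiplicative (f : ArithmeticFunction R) : Prop :=
  f 1 = 1 ∧ ∀ m n, f (m * n) = f m * f n

namespace IsCompletelyMultiplicative

variable {f g : ArithmeticFunction R}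

theorem isMultiplicative (hf : f.IsCompletelyMultiplicative) : f.IsMultiplicative :=
  ⟨hf.1, fun _ => hf.2 _ _⟩

theorem pmul (hf : f.IsCompletelyMultiplicative) (hg : g.IsCompletelyMultiplicative) :
    (f.pmul g).IsCompletelyMultiplicative :=
  ⟨by simp only [pmul_apply, hf.1, hg.1, mul_one], fun m n => by
    simp only [pmul_apply, hf.2, hg.2]; ring⟩

theorem mul_pmul (hg : g.IsCompletelyMultiplicative) (F G : ArithmeticFunction R) :
    (F * G).pmul g = F.pmul g * G.pmul g := by
  ext n
  simp only [pmul_apply, mul_apply, Finset.sum_mul]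
  refine Finset.sum_congr rfl fun x hx => ?_
  rw [← (Nat.mem_divisorsAntidiagonal.mp hx).1, hg.2]
  ring

end IsCompletelyMultiplicative

end CompletelyMultiplicative

def ofFun {R : Type*} [Zero R] (χ : ℕ → R) : ArithmeticFunction R :=
  ⟨fun n => if n = 0 then 0 else χ n, if_pos rfl⟩

theorem ofFun_apply {R : Type*} [Zero R] (χ : ℕ → R) {n : ℕ} (hn : n ≠ 0) :
    ofFun χ n = χ n :=
  if_neg hn

theorem isCompletelyMultiplicative_ofFun {R : Type*} [CommSemiring R] {χ : ℕ → R}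
    (h1 : χ 1 = 1) (hmul : ∀ a b, χ (a * b) = χ a * χ b) :
    (ofFun χ).IsCompletelyMultiplicative := by
  refine ⟨by simp [ofFun_apply, h1], fun m n => ?_⟩
  rcases eq_or_ne m 0 with rfl | hm
  · simp [ofFun]
  rcases eq_or_ne n 0 with rfl | hn
  · simp [ofFun]
  rw [ofFun_apply _ (mul_ne_zero hm hn), ofFun_apply _ hm, ofFun_apply _ hn, hmul]

theorem moebius_pmul_mul_apply_prime_pow {R : Type*} [CommRing R] {T g : ArithmeticFunction R}
    (hT : T 1 = 1) {p a : ℕ} (hp : p.Prime) (ha : a ≠ 0) :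
    ((μ : ArithmeticFunction R).pmul T * g) (p ^ a) = g (p ^ a) - T p * g (p ^ (a - 1)) := by
  obtain ⟨b, rfl⟩ := Nat.exists_eq_add_one_of_ne_zero ha
  have hμ : ∀ i, ((μ : ArithmeticFunction R).pmul T) (p ^ (i + 2)) = 0 := fun i => by
    rw [pmul_apply, intCoe_apply, moebius_apply_prime_pow hp (by omega), if_neg (by omega)]
    simp
  rw [mul_apply_eq_sum_divisors, Nat.sum_divisors_prime_pow hp, Finset.sum_range_succ',
    Finset.sum_range_succ']
  simp only [hμ, zero_mul, Finset.sum_const_zero, zero_add, pmul_apply, intCoe_apply,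
    moebius_apply_prime hp, hT, pow_one, pow_zero, moebius_apply_one, Nat.div_one,
    Nat.add_sub_cancel]
  rw [pow_succ', Nat.mul_div_cancel_left _ hp.pos]
  push_cast
  ring

section ZPow

variable {K : Type*} [Field K]

noncomputable def zpow (s : ℤ) : ArithmeticFunction K :=
  ofFun fun n => (n : K) ^ s

theorem zpow_apply (s : ℤ) {n : ℕ} (hn : n ≠ 0) : zpow s n = (n : K) ^ s :=
  ofFun_apply _ hn

theorem isCompletelyMultiplicative_zpow (s : ℤ) :
    (zpow s : ArithmeticFunction K).IsCompletelyMultiplicative :=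
  isCompletelyMultiplicative_ofFun (by simp) fun a b => by rw [Nat.cast_mul, mul_zpow]

theorem zpow_zero_eq_zeta : (zpow 0 : ArithmeticFunction K) = ζ := by
  ext n
  rcases eq_or_ne n 0 with rfl | hn
  · simp
  rw [zpow_apply _ hn, natCoe_apply, zeta_apply_ne hn, _root_.zpow_zero, Nat.cast_one]

/-- With `χ = (D₀/·)`, Cohen's formula is
`h_{k-1/2}(|D₀| n²) = h_{k-1/2}(|D₀|) |D₀|^{k-3/2} cohenSum k χ n`. -/
noncomputable def cohenSum (k : ℤ) (χ : ℕ → K) : ArithmeticFunction K :=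
  ((μ : ArithmeticFunction K).pmul ((ofFun χ).pmul (zpow (1 - k))) *
    ((ζ : ArithmeticFunction K) * zpow (3 - 2 * k))).pmul (zpow (2 * k - 3))

theorem cohenSum_apply (k : ℤ) (χ : ℕ → K) {n : ℕ} (hn : n ≠ 0) :
    cohenSum k χ n = (n : K) ^ (2 * k - 3) *
      ∑ d ∈ n.divisors, (μ d : K) * χ d * (d : K) ^ (1 - k) *
        ∑ t ∈ (n / d).divisors, (t : K) ^ (3 - 2 * k) := by
  rw [cohenSum, pmul_apply, zpow_apply _ hn, mul_comm, mul_apply_eq_sum_divisors]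
  congr 1
  refine Finset.sum_congr rfl fun d hd => ?_
  rw [coe_zeta_mul_apply, pmul_apply, pmul_apply, intCoe_apply,
    ofFun_apply _ (Nat.pos_of_mem_divisors hd).ne',
    zpow_apply _ (Nat.pos_of_mem_divisors hd).ne', ← mul_assoc]
  congr 1
  exact Finset.sum_congr rfl fun t ht => zpow_apply (K := K) _ (Nat.pos_of_mem_divisors ht).ne'

variable [CharZero K]

theorem zpow_pmul_zpow (s t : ℤ) :
    (zpow s : ArithmeticFunction K).pmul (zpow t) = zpow (s + t) := by
  ext n
  rcases eq_or_ne n 0 with rfl | hn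
  · simp
  rw [pmul_apply, zpow_apply _ hn, zpow_apply _ hn, zpow_apply _ hn,
    zpow_add₀ (Nat.cast_ne_zero.mpr hn)]

theorem moebius_mul_pmul_zpow (T : ArithmeticFunction K) (s : ℤ) :
    (μ : ArithmeticFunction K) *
        (((μ : ArithmeticFunction K).pmul T * ((ζ : ArithmeticFunction K) * zpow (-s))).pmul
          (zpow s))
      = (μ : ArithmeticFunction K).pmul (T.pmul (zpow s)) * zpow s := by
  have hZ := isCompletelyMultiplicative_zpow (K := K) s
  rw [hZ.mul_pmul, hZ.mul_pmul, pmul_assoc, zeta_pmul, zpow_pmul_zpow, neg_add_cancel,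
    zpow_zero_eq_zeta, mul_comm, mul_assoc, mul_assoc, coe_zeta_mul_coe_moebius, mul_one]

variable {χ : ℕ → K}

theorem moebius_mul_cohenSum (k : ℤ) :
    (μ : ArithmeticFunction K) * cohenSum k χ
      = (μ : ArithmeticFunction K).pmul ((ofFun χ).pmul (zpow (k - 2))) * zpow (2 * k - 3) := by
  rw [cohenSum, show (3 : ℤ) - 2 * k = -(2 * k - 3) by ring, moebius_mul_pmul_zpow,
    pmul_assoc, zpow_pmul_zpow, show 1 - k + (2 * k - 3) = k - 2 by ring]

theorem moebius_mul_cohenSum_apply_prime_pow (hχ1 : χ 1 = 1) (k : ℤ) {p a : ℕ} (hp : p.Prime)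
    (ha : a ≠ 0) :
    ((μ : ArithmeticFunction K) * cohenSum k χ) (p ^ a)
      = (p : K) ^ ((2 * k - 3) * (a : ℤ))
          - χ p * (p : K) ^ (k - 2 + (2 * k - 3) * ((a : ℤ) - 1)) := by
  have hp0 : (p : K) ≠ 0 := Nat.cast_ne_zero.mpr hp.ne_zero
  rw [moebius_mul_cohenSum, moebius_pmul_mul_apply_prime_pow
      (by rw [pmul_apply, ofFun_apply _ one_ne_zero, zpow_apply _ one_ne_zero, hχ1]; simp) hp ha,
    pmul_apply, ofFun_apply _ hp.ne_zero, zpow_apply _ hp.ne_zero,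
    zpow_apply _ (pow_ne_zero _ hp.ne_zero), zpow_apply _ (pow_ne_zero _ hp.ne_zero),
    zpow_add₀ hp0, Nat.cast_pow, Nat.cast_pow, ← zpow_natCast, ← zpow_natCast, ← zpow_mul,
    ← zpow_mul, Nat.cast_sub (Nat.one_le_iff_ne_zero.mpr ha)]
  push_cast
  ring_nf

theorem isMultiplicative_moebius_mul_cohenSum (hχ1 : χ 1 = 1)
    (hχ : ∀ a b, χ (a * b) = χ a * χ b) (k : ℤ) :
    ((μ : ArithmeticFunction K) * cohenSum k χ).IsMultiplicative := by
  rw [moebius_mul_cohenSum]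
  exact (isMultiplicative_moebius.intCast.pmul
    ((isCompletelyMultiplicative_ofFun hχ1 hχ).pmul
      (isCompletelyMultiplicative_zpow _)).isMultiplicative).mul
    (isCompletelyMultiplicative_zpow _).isMultiplicative

theorem moebius_mul_cohenSum_apply (hχ1 : χ 1 = 1) (hχ : ∀ a b, χ (a * b) = χ a * χ b)
    (k : ℤ) {n : ℕ} (hn : n ≠ 0) :
    ((μ : ArithmeticFunction K) * cohenSum k χ) n
      = ∏ q ∈ n.primeFactors, ((q : K) ^ ((2 * k - 3) * (n.factorization q : ℤ))
          - χ q * (q : K) ^ (k - 2 + (2 * k - 3) * ((n.factorization q : ℤ) - 1))) := by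
  rw [IsMultiplicative.multiplicative_factorization _
      (isMultiplicative_moebius_mul_cohenSum hχ1 hχ k) hn,
    Finsupp.prod, Nat.support_factorization]
  refine Finset.prod_congr rfl fun q hq => ?_
  exact moebius_mul_cohenSum_apply_prime_pow hχ1 k (Nat.prime_of_mem_primeFactors hq)
    (Finsupp.mem_support_iff.mp (by rwa [Nat.support_factorization]))

end ZPow

end ArithmeticFunction

theorem Real.natCast_mul_sq_rpow (D e : ℕ) (k : ℤ) :
    ((D * e ^ 2 : ℕ) : ℝ) ^ ((k : ℝ) - 3 / 2)
      = (D : ℝ) ^ ((k : ℝ) - 3 / 2) * (e : ℝ) ^ (2 * k - 3) := by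
  rw [Nat.cast_mul, Real.mul_rpow (Nat.cast_nonneg _) (by positivity), Nat.cast_pow,
    ← Real.rpow_natCast, ← Real.rpow_mul (Nat.cast_nonneg _), ← Real.rpow_intCast]
  push_cast
  ring_nf

theorem statement_0_general
    (k : ℤ)
    (D₀ : ℤ) (f : ℕ) (hf : 0 < f)
    -- `χ` is the Kronecker symbol `(D₀/·)`, a completely multiplicative function
    (χ : ℕ → ℝ) (hχ1 : χ 1 = 1) (hχ : ∀ a b : ℕ, χ (a * b) = χ a * χ b)
    -- `c` is the constant `h_{k-1/2}(|D₀|)`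
    (c : ℝ)
    (h : ℕ → ℝ)
    -- `h e` is `h_{k-1/2}(|D₀| e²)`, given by Cohen's explicit formula
    (hh : ∀ e : ℕ, e ∣ f →
      h e = c * (((D₀.natAbs * e ^ 2 : ℕ) : ℝ) ^ ((k : ℝ) - 3 / 2)) *
        ∑ d ∈ e.divisors, (ArithmeticFunction.moebius d : ℝ) * χ d * (d : ℝ) ^ ((1 : ℤ) - k) *
          ∑ t ∈ (e / d).divisors, (t : ℝ) ^ ((3 : ℤ) - 2 * k)) :
    ∑ d ∈ f.divisors, (ArithmeticFunction.moebius d : ℝ) * h (f / d)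
      = c * ((D₀.natAbs : ℝ) ^ ((k : ℝ) - 3 / 2)) *
        ∏ q ∈ f.primeFactors,
          ((q : ℝ) ^ ((2 * k - 3) * (f.factorization q : ℤ))
            - χ q * (q : ℝ) ^ (k - 2 + (2 * k - 3) * ((f.factorization q : ℤ) - 1))) := by
  set C := c * (D₀.natAbs : ℝ) ^ ((k : ℝ) - 3 / 2)
  have h_eq : ∀ e, e ∣ f → h e = C * cohenSum k χ e := by
    intro e he
    rw [hh e he, Real.natCast_mul_sq_rpow, cohenSum_apply k χ (ne_zero_of_dvd_ne_zero hf.ne' he)]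
    ring
  calc ∑ d ∈ f.divisors, (μ d : ℝ) * h (f / d)
      = C * ((μ : ArithmeticFunction ℝ) * cohenSum k χ) f := by
        rw [mul_apply_eq_sum_divisors, Finset.mul_sum]
        refine Finset.sum_congr rfl fun d hd => ?_
        rw [h_eq _ (Nat.div_dvd_of_dvd (Nat.dvd_of_mem_divisors hd)), intCoe_apply]
        ring
    _ = _ := by rw [moebius_mul_cohenSum_apply hχ1 hχ k hf.ne']

/-- The multiplicative product formula for
`g_k(m) = Σ_{d|f} μ(d) h_{k-1/2}(m/d²)`, where `h_{k-1/2}` is given by Cohen's explicit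
formula with `-m = D₀ f²`, `D₀` the discriminant of `ℚ(√-m)`, `χ = (D₀/·)` the
(completely multiplicative) Kronecker symbol and `c = h_{k-1/2}(|D₀|)` a fixed constant. -/
theorem statement_0
    (k : ℤ) (hk : Even k)
    (m : ℕ) (hm : m ≠ 0)
    (hmod : (-(m : ℤ)) % 4 = 0 ∨ (-(m : ℤ)) % 4 = 1)
    (D₀ : ℤ) (f : ℕ) (hf : 0 < f)
    (hDf : -(m : ℤ) = D₀ * (f : ℤ) ^ 2)
    -- `χ` is the Kronecker symbol `(D₀/·)`, a completely multiplicative function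
    (χ : ℕ → ℝ) (hχ1 : χ 1 = 1) (hχ : ∀ a b : ℕ, χ (a * b) = χ a * χ b)
    -- `c` is the constant `h_{k-1/2}(|D₀|)`
    (c : ℝ)
    (h : ℕ → ℝ)
    -- `h e` is `h_{k-1/2}(|D₀| e²)`, given by Cohen's explicit formula
    (hh : ∀ e : ℕ, e ∣ f →
      h e = c * (((D₀.natAbs * e ^ 2 : ℕ) : ℝ) ^ ((k : ℝ) - 3 / 2)) *
        ∑ d ∈ e.divisors, (ArithmeticFunction.moebius d : ℝ) * χ d * (d : ℝ) ^ ((1 : ℤ) - k) *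
          ∑ t ∈ (e / d).divisors, (t : ℝ) ^ ((3 : ℤ) - 2 * k)) :
    ∑ d ∈ f.divisors, (ArithmeticFunction.moebius d : ℝ) * h (f / d)
      = c * ((D₀.natAbs : ℝ) ^ ((k : ℝ) - 3 / 2)) *
        ∏ q ∈ f.primeFactors,
          ((q : ℝ) ^ ((2 * k - 3) * (f.factorization q : ℤ))
            - χ q * (q : ℝ) ^ (k - 2 + (2 * k - 3) * ((f.factorization q : ℤ) - 1))) :=
  statement_0_general k D₀ f hf χ hχ1 hχ c h hh
end

section
/- Let k be an even integer and m a natural number with -m ≡ 0 or 1 mod 4, and write -m = D₀ f² with D₀ the discriminant of ℚ(√-m). With h_{k-1/2} and g_k defined as in the multiplicative formula g_k(m) = h_{k-1/2}(|D₀|)|D₀|^{k-3/2} ∏_{q|f}(q^{(2k-3)l_q} − (D₀/q) q^{k-2+(2k-3)(l_q-1)}) with l_q = ord_q(f), for any prime p one has g_k(p²m) = (p^{2k-3} − (-m/p) p^{k-2}) · g_k(m), where (-m/p) is the Legendre symbol for odd p, extended at p=2 by (a/2)=0,1,-1 according as a is even, a ≡ ±1 mod 8, or a ≡ ±3 mod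 8. -/
/-!
Write `g_k(|D₀| e²) = c |D₀|^{k-3/2} ∏_{q ∣ e} F_q(ord_q e)` with the local factor
`F_q(l) = q^{(2k-3)l} − χ(q) q^{k-2+(2k-3)(l-1)}`. Multiplying `e = f` by `p` changes only the
factor at `p`, raising its exponent by one. If `p ∣ f` this multiplies `F_p` by `p^{2k-3}`;
if `p ∤ f` a new factor `F_p(1) = p^{2k-3} − χ(p) p^{k-2}` appears. In both cases the
multiplier is `p^{2k-3} − (-m/p) p^{k-2}`.
-/

theorem Nat.prod_primeFactors_prime_mul {M : Type*} [CommMonoid M] (F : ℕ → ℕ → M)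
    {p n : ℕ} (hp : p.Prime) (hn : n ≠ 0) :
    ∏ q ∈ (p * n).primeFactors, F q ((p * n).factorization q)
      = F p (n.factorization p + 1) *
          ∏ q ∈ n.primeFactors.erase p, F q (n.factorization q) := by
  have hfac : (p * n).factorization = n.factorization + Finsupp.single p 1 := by
    rw [Nat.factorization_mul hp.ne_zero hn, hp.factorization, add_comm]
  have hmem : p ∈ (p * n).primeFactors :=
    Nat.mem_primeFactors.mpr ⟨hp, dvd_mul_right p n, mul_ne_zero hp.ne_zero hn⟩
  have herase : (p * n).primeFactors.erase p = n.primeFactors.erase p := by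
    rw [Nat.primeFactors_mul hp.ne_zero hn, hp.primeFactors, Finset.erase_union_distrib,
      Finset.erase_singleton, Finset.empty_union]
  rw [← Finset.mul_prod_erase _ _ hmem, herase, hfac]
  congr 1
  · simp
  · refine Finset.prod_congr rfl fun q hq => ?_
    simp [(Finset.ne_of_mem_erase hq).symm]

section LocalFactor

variable {K : Type*} [Field K] (χ : ℕ → K) (k : ℤ)

def localFactor (q l : ℕ) : K :=
  (q : K) ^ ((2 * k - 3) * (l : ℤ)) - χ q * (q : K) ^ (k - 2 + (2 * k - 3) * ((l : ℤ) - 1))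

theorem localFactor_one (q : ℕ) :
    localFactor χ k q 1 = (q : K) ^ (2 * k - 3) - χ q * (q : K) ^ (k - 2) := by
  simp [localFactor]

theorem localFactor_succ {q : ℕ} (hq : (q : K) ≠ 0) (l : ℕ) :
    localFactor χ k q (l + 1) = (q : K) ^ (2 * k - 3) * localFactor χ k q l := by
  simp only [localFactor, Nat.cast_add, Nat.cast_one, add_sub_cancel_right]
  rw [mul_add, mul_one, zpow_add₀ hq,
    show k - 2 + (2 * k - 3) * (l : ℤ)
      = 2 * k - 3 + (k - 2 + (2 * k - 3) * ((l : ℤ) - 1)) by ring,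
    zpow_add₀ hq]
  ring

end LocalFactor

theorem statement_1_general
    (k : ℤ)
    (m : ℕ)
    (D₀ : ℤ) (f : ℕ) (hf : 0 < f)
    (hmf : m = D₀.natAbs * f ^ 2)
    -- `χ` is the Kronecker symbol `(D₀/·)`, completely multiplicative
    (χ : ℕ → ℝ)
    (c : ℝ)
    (p : ℕ) (hp : p.Prime)
    -- `ε` is the extended Legendre symbol `(-m/p)`
    (ε : ℝ) (hε0 : p ∣ f → ε = 0) (hε1 : ¬ p ∣ f → ε = χ p)
    (g : ℕ → ℝ)
    -- `g (|D₀| e²)` is `g_k(|D₀| e²)`, given by the multiplicative product formula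
    (hg : ∀ e : ℕ, 0 < e →
      g (D₀.natAbs * e ^ 2)
        = c * ((D₀.natAbs : ℝ) ^ ((k : ℝ) - 3 / 2)) *
          ∏ q ∈ e.primeFactors,
            ((q : ℝ) ^ ((2 * k - 3) * (e.factorization q : ℤ))
              - χ q * (q : ℝ) ^ (k - 2 + (2 * k - 3) * ((e.factorization q : ℤ) - 1)))) :
    g (p ^ 2 * m) = ((p : ℝ) ^ (2 * k - 3) - ε * (p : ℝ) ^ (k - 2)) * g m := by
  have hpm : p ^ 2 * m = D₀.natAbs * (p * f) ^ 2 := by rw [hmf]; ring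
  rw [hpm, hg (p * f) (Nat.mul_pos hp.pos hf), hmf, hg f hf]
  change c * _ * ∏ q ∈ _, localFactor χ k q _ = _ * (c * _ * ∏ q ∈ _, localFactor χ k q _)
  rw [Nat.prod_primeFactors_prime_mul _ hp hf.ne']
  by_cases hpf : p ∣ f
  · have hmem : p ∈ f.primeFactors := Nat.mem_primeFactors.mpr ⟨hp, hpf, hf.ne'⟩
    rw [hε0 hpf, localFactor_succ χ k (Nat.cast_ne_zero.mpr hp.ne_zero),
      ← Finset.mul_prod_erase _ _ hmem]
    ring
  · have hmem : p ∉ f.primeFactors := fun h => hpf (Nat.dvd_of_mem_primeFactors h)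
    rw [hε1 hpf, Nat.factorization_eq_zero_of_not_dvd hpf, localFactor_one,
      Finset.erase_eq_of_notMem hmem]
    ring

/-- `g_k(p²m) = (p^{2k-3} − (-m/p) p^{k-2}) g_k(m)`, where `g_k` is given
by the multiplicative formula `g_k(|D₀|e²) = c |D₀|^{k-3/2} ∏_{q|e}(q^{(2k-3)l_q} −
(D₀/q) q^{k-2+(2k-3)(l_q-1)})` with `l_q = ord_q(e)`, `-m = D₀ f²`, `χ = (D₀/·)` the
Kronecker symbol, and `ε = (-m/p)` the extended Legendre symbol, which is `0` when `p ∣ f`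
and `(D₀/p)` otherwise. -/
theorem statement_1
    (k : ℤ) (hk : Even k)
    (m : ℕ) (hm : m ≠ 0)
    (hmod : (-(m : ℤ)) % 4 = 0 ∨ (-(m : ℤ)) % 4 = 1)
    (D₀ : ℤ) (f : ℕ) (hf : 0 < f)
    (hDf : -(m : ℤ) = D₀ * (f : ℤ) ^ 2)
    (hmf : m = D₀.natAbs * f ^ 2)
    -- `χ` is the Kronecker symbol `(D₀/·)`, completely multiplicative
    (χ : ℕ → ℝ) (hχ1 : χ 1 = 1) (hχ : ∀ a b : ℕ, χ (a * b) = χ a * χ b)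
    (c : ℝ)
    (p : ℕ) (hp : p.Prime)
    -- `ε` is the extended Legendre symbol `(-m/p)`
    (ε : ℝ) (hε0 : p ∣ f → ε = 0) (hε1 : ¬ p ∣ f → ε = χ p)
    (g : ℕ → ℝ)
    -- `g (|D₀| e²)` is `g_k(|D₀| e²)`, given by the multiplicative product formula
    (hg : ∀ e : ℕ, 0 < e →
      g (D₀.natAbs * e ^ 2)
        = c * ((D₀.natAbs : ℝ) ^ ((k : ℝ) - 3 / 2)) *
          ∏ q ∈ e.primeFactors,
            ((q : ℝ) ^ ((2 * k - 3) * (e.factorization q : ℤ))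
              - χ q * (q : ℝ) ^ (k - 2 + (2 * k - 3) * ((e.factorization q : ℤ) - 1)))) :
    g (p ^ 2 * m) = ((p : ℝ) ^ (2 * k - 3) - ε * (p : ℝ) ^ (k - 2)) * g m :=
  statement_1_general k m D₀ f hf hmf χ c p hp ε hε0 hε1 g hg
end

section
/- Let p be a prime, and let F be a function from 2×2 integer matrices to ℂ such that all sums below converge absolutely. Let L(p) = { [[1,0],[x,1]] : x mod p } ∪ { [[0,-1],[1,p]] }, a complete set of representatives of (δ GL₂(ℤ) δ⁻¹ ∩ GL₂(ℤ))\GL₂(ℤ) for δ = diag(p, p²)·(scalar normalization), and let L* = { λ ∈ ℤ^{2×2} : first column of λ lies in pℤ × ℤ } (i.e. entries λ₁₁ ∈ pℤ). Then Σ_{A ∈ L(p)} Σ_{λ ∈ L*} F(ᵗA λ) = Σ_{λ ∈ ℤ^{2×2}} F(λ) + p · Σ_{λ ∈ ℤ^{2×2}} F(λ · diag(p,1)). -/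
open Matrix

/-- The set `L(p) = { [[1,0],[x,1]] : x mod p } ∪ { [[0,-1],[1,p]] }`, a complete set of
representatives of `(δ GL₂(ℤ) δ⁻¹ ∩ GL₂(ℤ))\GL₂(ℤ)`, indexed by `Fin (p+1)`. -/
def Lp (p : ℕ) : Fin (p + 1) → Matrix (Fin 2) (Fin 2) ℤ :=
  fun i => if (i : ℕ) < p then !![1, 0; (i : ℤ), 1] else !![0, -1; 1, (p : ℤ)]

/-!
Substituting `μ = ᵗA λ`, the inner sum for `A` becomes the sum of `F` over the matrices `μ` with
`p ∣ (ᵗA⁻¹ μ)₀₀`, a condition on the first column `(a, b)` of `μ` only. After exchanging the finite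
sum with the series, each `μ` is counted once for every `A ∈ L(p)` with `p ∣ (ᵗA⁻¹ (a, b))₀`: that is
`p + 1` times when `p ∣ a` and `p ∣ b`, and once otherwise. The matrices whose first column lies in
`pℤ × pℤ` are exactly the `λ · diag(p, 1)`.
-/

open Finset

theorem tsum_comp_injective_eq_tsum_indicator_range {α β M : Type*} [AddCommMonoid M]
    [TopologicalSpace M] {g : β → α} (hg : Function.Injective g) (f : α → M) :
    ∑' b, f (g b) = ∑' a, (Set.range g).indicator f a :=
  (tsum_range f hg).symm.trans (tsum_subtype _ f)

section MatrixRange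

variable {n R : Type*} [Fintype n] [DecidableEq n] [CommRing R]

theorem Matrix.range_mul_left_subtype {A : Matrix n n R} (hA : IsUnit A.det)
    (P : Matrix n n R → Prop) :
    Set.range (fun l : {l // P l} => A * l.1) = {m | P (A⁻¹ * m)} := by
  ext m
  constructor
  · rintro ⟨⟨l, hl⟩, rfl⟩
    simpa [nonsing_inv_mul_cancel_left A _ hA] using hl
  · intro hm
    exact ⟨⟨A⁻¹ * m, hm⟩, mul_nonsing_inv_cancel_left A _ hA⟩

theorem Matrix.injective_mul_left_subtype {A : Matrix n n R} (hA : IsUnit A.det)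
    (P : Matrix n n R → Prop) : Function.Injective (fun l : {l // P l} => A * l.1) :=
  fun l l' h => Subtype.ext <| by
    simpa [nonsing_inv_mul_cancel_left A _ hA] using congrArg (A⁻¹ * ·) h

variable {m : Type*}

theorem Matrix.range_mul_diagonal (d : n → R) :
    Set.range (fun M : Matrix m n R => M * diagonal d) = {M | ∀ i j, d j ∣ M i j} := by
  ext M
  constructor
  · rintro ⟨N, rfl⟩ i j
    simp
  · intro hM
    choose c hc using hM
    exact ⟨of c, by ext i j; simp [hc, mul_comm]⟩

variable [IsDomain R]

theorem Matrix.injective_mul_diagonal {d : n → R} (hd : ∀ j, d j ≠ 0) :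
    Function.Injective (fun M : Matrix m n R => M * diagonal d) := by
  intro M N h
  ext i j
  exact mul_right_cancel₀ (hd j) (by simpa using congrFun (congrFun h i) j)

end MatrixRange

theorem ZMod.card_filter_natCast_fin (p : ℕ) [NeZero p] (P : ZMod p → Prop) [DecidablePred P] :
    #{i : Fin p | P (i : ℕ)} = #{x : ZMod p | P x} := by
  refine card_nbij' (fun i => (i : ℕ)) (fun x => ⟨x.val, x.val_lt⟩) ?_ ?_ ?_ ?_
  · intro i hi
    simpa using hi
  · intro x hx
    simpa [ZMod.natCast_zmod_val] using hx
  · intro i _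
    exact Fin.ext (ZMod.val_natCast_of_lt i.isLt)
  · intro x _
    exact ZMod.natCast_zmod_val x

theorem Finset.card_filter_sub_mul_eq_zero {K : Type*} [Field K] [Fintype K] [DecidableEq K]
    {b : K} (hb : b ≠ 0) (a : K) : #{x : K | a - x * b = 0} = 1 :=
  card_eq_one.mpr ⟨a / b, by ext x; simp [sub_eq_zero, eq_div_iff hb, eq_comm]⟩

theorem card_filter_dvd_sub_mul {p : ℕ} (hp : p.Prime) {a b : ℤ} (hb : ¬ (p : ℤ) ∣ b) :
    #{i : Fin p | (p : ℤ) ∣ a - i * b} = 1 := by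
  have := Fact.mk hp
  have hb' : (b : ZMod p) ≠ 0 := by rwa [Ne, ZMod.intCast_zmod_eq_zero_iff_dvd]
  simp_rw [← ZMod.intCast_zmod_eq_zero_iff_dvd]
  push_cast
  rw [ZMod.card_filter_natCast_fin p (fun x => (a : ZMod p) - x * b = 0)]
  exact card_filter_sub_mul_eq_zero hb' _

theorem det_Lp (p : ℕ) (i : Fin (p + 1)) : (Lp p i).det = 1 := by
  unfold Lp
  split_ifs <;> simp [det_fin_two]

theorem inv_transpose_Lp_mulVec_zero (p : ℕ) (i : Fin (p + 1)) (a b : ℤ) :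
    (((Lp p i)ᵀ)⁻¹ *ᵥ ![a, b]) 0 = if (i : ℕ) < p then a - i * b else p * a - b := by
  rw [Matrix.inv_def, det_transpose, det_Lp, Ring.inverse_one, one_smul, adjugate_fin_two]
  unfold Lp
  split_ifs <;> simp [mulVec, dotProduct, Fin.sum_univ_two] <;> ring

theorem card_filter_dvd_inv_transpose_Lp_mulVec_zero {p : ℕ} (hp : p.Prime) (a b : ℤ) :
    #{i : Fin (p + 1) | (p : ℤ) ∣ (((Lp p i)ᵀ)⁻¹ *ᵥ ![a, b]) 0}
      = if (p : ℤ) ∣ a ∧ (p : ℤ) ∣ b then p + 1 else 1 := by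
  have hlast : (p : ℤ) ∣ p * a - b ↔ (p : ℤ) ∣ b := dvd_sub_right (dvd_mul_right _ _)
  rw [card_filter, Fin.sum_univ_castSucc]
  simp only [inv_transpose_Lp_mulVec_zero, Fin.val_castSucc, Fin.is_lt, if_true, Fin.val_last,
    lt_irrefl, if_false, hlast, ← card_filter]
  by_cases hb : (p : ℤ) ∣ b
  · have hdvd_iff : ∀ i : Fin p, (p : ℤ) ∣ a - i * b ↔ (p : ℤ) ∣ a := fun i =>
      dvd_sub_left (dvd_mul_of_dvd_right hb _)
    by_cases ha : (p : ℤ) ∣ a <;> simp [hdvd_iff, ha, hb]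
  · simp [card_filter_dvd_sub_mul hp hb, hb]

theorem sum_indicator_dvd_inv_transpose_Lp_mul {M : Type*} [AddCommMonoid M] {p : ℕ}
    (hp : p.Prime) (f : Matrix (Fin 2) (Fin 2) ℤ → M) (μ : Matrix (Fin 2) (Fin 2) ℤ) :
    ∑ i : Fin (p + 1), {m | (p : ℤ) ∣ (((Lp p i)ᵀ)⁻¹ * m) 0 0}.indicator f μ
      = f μ + p • {m : Matrix (Fin 2) (Fin 2) ℤ | ∀ i j, ![(p : ℤ), 1] j ∣ m i j}.indicator f μ := by
  classical
  have hcol : ∀ A : Matrix (Fin 2) (Fin 2) ℤ, (A * μ) 0 0 = (A *ᵥ ![μ 0 0, μ 1 0]) 0 := by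
    simp [mul_apply, mulVec, dotProduct, Fin.sum_univ_two]
  have hcolumn : (∀ i j, ![(p : ℤ), 1] j ∣ μ i j) ↔ (p : ℤ) ∣ μ 0 0 ∧ (p : ℤ) ∣ μ 1 0 := by
    simp [Fin.forall_fin_two]
  rw [sum_indicator_eq_sum_filter, sum_const]
  simp only [Set.mem_ofPred_eq, hcol, card_filter_dvd_inv_transpose_Lp_mulVec_zero hp,
    Set.indicator_apply, hcolumn]
  split_ifs <;> simp [add_nsmul, add_comm]

theorem statement_2_general (p : ℕ) (hp : p.Prime)
    (F : Matrix (Fin 2) (Fin 2) ℤ → ℂ)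
    (hF : Summable F) :
    ∑ i : Fin (p + 1), ∑' lam : {l : Matrix (Fin 2) (Fin 2) ℤ // (p : ℤ) ∣ l 0 0},
        F ((Lp p i)ᵀ * lam.1)
      = (∑' lam : Matrix (Fin 2) (Fin 2) ℤ, F lam)
        + (p : ℂ) * ∑' lam : Matrix (Fin 2) (Fin 2) ℤ, F (lam * !![(p : ℤ), 0; 0, 1]) := by
  have hunit (i : Fin (p + 1)) : IsUnit ((Lp p i)ᵀ).det := by simp [det_Lp]
  have hdiag : !![(p : ℤ), 0; 0, 1] = diagonal ![(p : ℤ), 1] := by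
    ext i j
    fin_cases i <;> fin_cases j <;> rfl
  have hd : ∀ j, ![(p : ℤ), 1] j ≠ 0 := by simp [Fin.forall_fin_two, hp.ne_zero]
  calc ∑ i : Fin (p + 1), ∑' lam : {l : Matrix (Fin 2) (Fin 2) ℤ // (p : ℤ) ∣ l 0 0},
        F ((Lp p i)ᵀ * lam.1)
      = ∑ i : Fin (p + 1), ∑' μ, {m | (p : ℤ) ∣ (((Lp p i)ᵀ)⁻¹ * m) 0 0}.indicator F μ := by
        refine sum_congr rfl fun i _ => ?_
        rw [tsum_comp_injective_eq_tsum_indicator_range (injective_mul_left_subtype (hunit i) _),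
          range_mul_left_subtype (hunit i)]
    _ = ∑' μ, ∑ i : Fin (p + 1), {m | (p : ℤ) ∣ (((Lp p i)ᵀ)⁻¹ * m) 0 0}.indicator F μ :=
        (Summable.tsum_finsetSum fun i _ => hF.indicator _).symm
    _ = ∑' μ, (F μ + (p : ℂ) * {m | ∀ i j, ![(p : ℤ), 1] j ∣ m i j}.indicator F μ) := by
        simp_rw [sum_indicator_dvd_inv_transpose_Lp_mul hp F, nsmul_eq_mul]
    _ = _ := by
        rw [hF.tsum_add ((hF.indicator _).mul_left _), tsum_mul_left, hdiag,
          tsum_comp_injective_eq_tsum_indicator_range (injective_mul_diagonal hd),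
          range_mul_diagonal]

/-- `Σ_{A ∈ L(p)} Σ_{λ ∈ L*} F(ᵗA λ) = Σ_λ F(λ) + p Σ_λ F(λ · diag(p,1))`,
where `L* = { λ ∈ ℤ^{2×2} : λ₁₁ ∈ pℤ }` and all sums converge absolutely. -/
theorem statement_2 (p : ℕ) (hp : p.Prime)
    (F : Matrix (Fin 2) (Fin 2) ℤ → ℂ)
    (hF : Summable F)
    (hF1 : ∀ i : Fin (p + 1),
      Summable (fun lam : {l : Matrix (Fin 2) (Fin 2) ℤ // (p : ℤ) ∣ l 0 0} =>
        F ((Lp p i)ᵀ * lam.1)))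
    (hF2 : Summable (fun lam : Matrix (Fin 2) (Fin 2) ℤ => F (lam * !![(p : ℤ), 0; 0, 1]))) :
    ∑ i : Fin (p + 1), ∑' lam : {l : Matrix (Fin 2) (Fin 2) ℤ // (p : ℤ) ∣ l 0 0},
        F ((Lp p i)ᵀ * lam.1)
      = (∑' lam : Matrix (Fin 2) (Fin 2) ℤ, F lam)
        + (p : ℂ) * ∑' lam : Matrix (Fin 2) (Fin 2) ℤ, F (lam * !![(p : ℤ), 0; 0, 1]) :=
  statement_2_general p hp F hF
end

section
/- Let p be a prime and let L(p²) = { [[1,0],[x,1]] : x mod p² } ∪ { [[0,-1],[1,py]] : y mod p }. For any function F on ℤ^{2×2} for which the sums converge absolutely, Σ_{A ∈ L(p²)} Σ_{λ ∈ M} F(ᵗA λ) = Σ_{λ ∈ ℤ^{2×2}} F(λ) + (p-1) Σ_{λ ∈ ℤ^{2×2}} F(λ·diag(p,1)) + p² Σ_{λ ∈ ℤ^{2×2}} F(λ·diag(p²,1)), where M = { λ ∈ ℤ^{2×2} : λ₁₁ ∈ p²ℤ }. -/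
/-!
Substituting `μ = ᵗA λ` turns the inner sum for `A ∈ L(p²)` into the sum of `F μ` over the
matrices `μ` whose first column `v` satisfies `p² ∣ (ᵗA⁻¹ v)₀`. After exchanging the finite and
the infinite sum, `F μ` is weighted by the number of such `A`: it is `p² + p` if `p² ∣ v`, `p` if
`p ∣ v` but `p² ∤ v`, and `1` otherwise. Since `λ ↦ λ · diag(d, 1)` is a bijection onto the
matrices whose first column is divisible by `d`, these are exactly the weights of the right-hand
side, as `1 + (p - 1) + p² = p² + p`.
-/

open Matrix

/-- The set `L(p²) = { [[1,0],[x,1]] : x mod p² } ∪ { [[0,-1],[1,py]] : y mod p }`,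
indexed by `Fin (p² + p)`. -/
def Lp2 (p : ℕ) : Fin (p ^ 2 + p) → Matrix (Fin 2) (Fin 2) ℤ :=
  fun i => if (i : ℕ) < p ^ 2 then !![1, 0; (i : ℤ), 1]
    else !![0, -1; 1, (p : ℤ) * ((i : ℤ) - (p : ℤ) ^ 2)]

theorem Equiv.tsum_subtype_comp {α β γ : Type*} [AddCommMonoid γ] [TopologicalSpace γ]
    (e : α ≃ β) (P : α → Prop) (f : β → γ) :
    ∑' x : {x // P x}, f (e x) = ∑' y, {y | P (e.symm y)}.indicator f y := by
  rw [← tsum_subtype]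
  exact (e.subtypeEquiv fun x => by simp).tsum_eq fun y : {y | P (e.symm y)} => f y

namespace Matrix

variable {m n R α : Type*} [AddCommMonoid α] [TopologicalSpace α]

theorem tsum_subtype_mul_left_of_det_eq_one [Fintype n] [DecidableEq n] [CommRing R]
    (A : Matrix n n R) (hA : A.det = 1) (P : Matrix n m R → Prop) (f : Matrix n m R → α) :
    ∑' l : {l // P l}, f (A * l.1) = ∑' μ, {μ | P (A.adjugate * μ)}.indicator f μ :=
  Equiv.tsum_subtype_comp
    { toFun := (A * · : Matrix n m R → Matrix n m R)
      invFun := (A.adjugate * · : Matrix n m R → Matrix n m R)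
      left_inv := fun l => by simp [← Matrix.mul_assoc, adjugate_mul, hA]
      right_inv := fun l => by simp [← Matrix.mul_assoc, mul_adjugate, hA] } P f

theorem range_mul_diagonal_s3 [Fintype n] [DecidableEq n] [CommSemiring R] (w : n → R) :
    Set.range (· * diagonal w : Matrix m n R → Matrix m n R) = {μ | ∀ i j, w j ∣ μ i j} := by
  ext μ
  constructor
  · rintro ⟨l, rfl⟩ i j
    simp [mul_diagonal]
  · intro hμ
    choose l hl using hμ
    exact ⟨of l, by ext i j; simp [mul_diagonal, hl i j, mul_comm]⟩

theorem injective_mul_diagonal_s3 [Fintype n] [DecidableEq n] [CommRing R] [IsDomain R]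
    (w : n → R) (hw : ∀ j, w j ≠ 0) :
    Function.Injective (· * diagonal w : Matrix m n R → Matrix m n R) := fun l l' h => by
  ext i j
  simpa [mul_diagonal, hw j] using congr_fun₂ h i j

theorem tsum_mul_diagonal [Fintype n] [DecidableEq n] [CommRing R] [IsDomain R]
    (w : n → R) (hw : ∀ j, w j ≠ 0) (f : Matrix m n R → α) :
    ∑' l : Matrix m n R, f (l * diagonal w) = ∑' μ, {μ | ∀ i j, w j ∣ μ i j}.indicator f μ := by
  rw [← range_mul_diagonal_s3, ← _root_.tsum_subtype, tsum_range f (injective_mul_diagonal_s3 w hw)]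

theorem tsum_mul_diag_fin_two [CommRing R] [IsDomain R] (d : R) (hd : d ≠ 0)
    (f : Matrix (Fin 2) (Fin 2) R → α) :
    ∑' l : Matrix (Fin 2) (Fin 2) R, f (l * !![d, 0; 0, 1])
      = ∑' μ, {μ | d ∣ μ 0 0 ∧ d ∣ μ 1 0}.indicator f μ := by
  rw [← diagonal_vec2, tsum_mul_diagonal _ (by simp [Fin.forall_fin_two, hd])]
  simp [Fin.forall_fin_two]

end Matrix

open Finset in
theorem Fin.card_filter_val_eq_count {n : ℕ} (Q : ℕ → Prop) [DecidablePred Q] :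
    #{i : Fin n | Q i} = Nat.count Q n := by
  rw [Nat.count_eq_card_filter_range, ← Nat.Iio_eq_range, ← Fin.map_valEmbedding_univ,
    filter_map, card_map]
  rfl

open Finset in
theorem Fin.card_filter_univ_add {a b : ℕ} (P : Fin (a + b) → Prop) [DecidablePred P] :
    #{i | P i} = #{i : Fin a | P (castAdd b i)} + #{j : Fin b | P (natAdd a j)} := by
  simp only [card_filter, Fin.sum_univ_add]

section Counting

open Nat

theorem count_dvd_sub_mul_of_isCoprime (n m : ℕ) [NeZero n] (a b : ℤ) (hb : IsCoprime b n) :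
    count (fun x : ℕ => (n : ℤ) ∣ a - x * b) (m * n) = m := by
  set v := ((a : ZMod n) * ↑(ZMod.unitOfIsCoprime b hb)⁻¹).val
  have hmod : ∀ x : ℕ, (n : ℤ) ∣ a - x * b ↔ x ≡ v [MOD n] := by
    intro x
    rw [← ZMod.intCast_zmod_eq_zero_iff_dvd, ← ZMod.natCast_eq_natCast_iff, ZMod.natCast_zmod_val]
    push_cast
    rw [sub_eq_zero, eq_comm, Units.eq_mul_inv_iff_mul_eq, ZMod.coe_unitOfIsCoprime]
  simp_rw [hmod]
  rw [count_modEq_card _ (NeZero.pos n), Nat.mul_mod_left, Nat.mul_div_cancel _ (NeZero.pos n)]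
  simp

theorem count_dvd_sub_mul_of_dvd {n a b : ℤ} (N : ℕ) (hb : n ∣ b) :
    count (fun x : ℕ => n ∣ a - x * b) N = if n ∣ a then N else 0 := by
  have hiff : ∀ x : ℕ, n ∣ a - x * b ↔ n ∣ a := fun x => dvd_sub_left (hb.mul_left x)
  simp_rw [hiff]
  split_ifs with ha <;> simp [ha]

theorem count_mul_dvd_sub_mul_mul {c n a b : ℤ} (hc : c ≠ 0) (N : ℕ) :
    count (fun x : ℕ => c * n ∣ c * a - x * (c * b)) N
      = count (fun x : ℕ => n ∣ a - x * b) N := by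
  simp_rw [mul_left_comm _ c b, ← mul_sub, mul_dvd_mul_iff_left hc]

theorem count_add_count_of_prime_dvd {p : ℕ} (hp : p.Prime) (a b : ℤ) :
    count (fun x : ℕ => (p : ℤ) ^ 2 ∣ p * a - x * (p * b)) (p ^ 2)
        + count (fun y : ℕ => (p : ℤ) ^ 2 ∣ p * b - y * (p * (p * a))) p
      = if (p : ℤ) ∣ a ∧ (p : ℤ) ∣ b then p ^ 2 + p else p := by
  have : NeZero p := ⟨hp.ne_zero⟩
  have hp0 : (p : ℤ) ≠ 0 := by exact_mod_cast hp.ne_zero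
  simp_rw [sq, count_mul_dvd_sub_mul_mul hp0,
    count_dvd_sub_mul_of_dvd p (dvd_mul_right (p : ℤ) a)]
  by_cases hb : (p : ℤ) ∣ b
  · rw [count_dvd_sub_mul_of_dvd _ hb]
    split_ifs <;> simp_all
  · have hcop : IsCoprime b p :=
      ((Nat.prime_iff_prime_int.mp hp).coprime_iff_not_dvd.mpr hb).symm
    simp [count_dvd_sub_mul_of_isCoprime p p a b hcop, hb]

theorem count_add_count_prime_sq {p : ℕ} (hp : p.Prime) (a b : ℤ) :
    count (fun x : ℕ => (p : ℤ) ^ 2 ∣ a - x * b) (p ^ 2)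
        + count (fun y : ℕ => (p : ℤ) ^ 2 ∣ b - y * (p * a)) p
      = if (p : ℤ) ^ 2 ∣ a ∧ (p : ℤ) ^ 2 ∣ b then p ^ 2 + p
        else if (p : ℤ) ∣ a ∧ (p : ℤ) ∣ b then p else 1 := by
  have : NeZero p := ⟨hp.ne_zero⟩
  have hp0 : (p : ℤ) ≠ 0 := by exact_mod_cast hp.ne_zero
  have hpZ : Prime (p : ℤ) := Nat.prime_iff_prime_int.mp hp
  have hp_sq : (p : ℤ) ∣ p ^ 2 := dvd_pow_self _ two_ne_zero
  by_cases hb : (p : ℤ) ∣ b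
  · obtain ⟨b, rfl⟩ := hb
    by_cases ha : (p : ℤ) ∣ a
    · obtain ⟨a, rfl⟩ := ha
      rw [count_add_count_of_prime_dvd hp]
      simp [sq, mul_dvd_mul_iff_left hp0]
    · have hcop : IsCoprime a p := (hpZ.coprime_iff_not_dvd.mpr ha).symm
      have h1 : count (fun x : ℕ => (p : ℤ) ^ 2 ∣ a - x * (p * b)) (p ^ 2) = 0 :=
        count_of_forall_not fun x _ h =>
          ha ((dvd_sub_left (dvd_mul_of_dvd_right (dvd_mul_right _ _) _)).mp (hp_sq.trans h))
      have h2 := count_dvd_sub_mul_of_isCoprime p 1 b a hcop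
      rw [one_mul, ← count_mul_dvd_sub_mul_mul hp0, ← sq] at h2
      rw [h1, h2, if_neg fun h => ha (hp_sq.trans h.1), if_neg fun h => ha h.1]
  · have hcop : IsCoprime b ((p ^ 2 : ℕ) : ℤ) := by
      push_cast
      exact ((hpZ.coprime_iff_not_dvd.mpr hb).symm).pow_right
    have h1 := count_dvd_sub_mul_of_isCoprime (p ^ 2) 1 a b hcop
    have h2 : count (fun y : ℕ => (p : ℤ) ^ 2 ∣ b - y * (p * a)) p = 0 :=
      count_of_forall_not fun y _ h =>
        hb ((dvd_sub_left (dvd_mul_of_dvd_right (dvd_mul_right _ _) _)).mp (hp_sq.trans h))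
    push_cast [one_mul] at h1
    rw [h1, h2, if_neg fun h => hb (hp_sq.trans h.2), if_neg fun h => hb h.2]

end Counting

section Lp2

open Finset

theorem det_Lp2 (p : ℕ) (i : Fin (p ^ 2 + p)) : (Lp2 p i).det = 1 := by
  unfold Lp2
  split_ifs <;> simp [det_fin_two_of]

theorem Lp2_castAdd (p : ℕ) (x : Fin (p ^ 2)) :
    Lp2 p (Fin.castAdd p x) = !![1, 0; (x : ℤ), 1] := by
  simp [Lp2]

theorem Lp2_natAdd (p : ℕ) (y : Fin p) :
    Lp2 p (Fin.natAdd (p ^ 2) y) = !![0, -1; 1, (p : ℤ) * y] := by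
  simp [Lp2]

/-- Since `det A = 1`, `adjugate A = A⁻¹`: this is the number of `A ∈ L(p²)` such that
`p² ∣ (ᵗA⁻¹ v)₀`. -/
theorem card_filter_Lp2 {p : ℕ} (hp : p.Prime) (v : Fin 2 → ℤ) :
    #{i | (p : ℤ) ^ 2 ∣ ((Lp2 p i)ᵀ.adjugate *ᵥ v) 0}
      = if (p : ℤ) ^ 2 ∣ v 0 ∧ (p : ℤ) ^ 2 ∣ v 1 then p ^ 2 + p
        else if (p : ℤ) ∣ v 0 ∧ (p : ℤ) ∣ v 1 then p else 1 := by
  rw [Fin.card_filter_univ_add]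
  simp only [Lp2_castAdd, Lp2_natAdd]
  have hsecond (y : ℤ) :
      (p : ℤ) ^ 2 ∣ p * y * v 0 + -v 1 ↔ (p : ℤ) ^ 2 ∣ v 1 - y * (p * v 0) := by
    rw [← dvd_neg]; ring_nf
  simp only [mulVec, dotProduct, adjugate_fin_two, transpose_apply, of_apply, cons_val',
    cons_val_one, cons_val_fin_one, cons_val_zero, neg_zero, Fin.sum_univ_two, one_mul, neg_mul,
    neg_neg, hsecond]
  rw [← count_add_count_prime_sq hp, ← Fin.card_filter_val_eq_count,
    ← Fin.card_filter_val_eq_count]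
  simp only [sub_eq_add_neg]

theorem tsum_transpose_Lp2_mul {α : Type*} [AddCommMonoid α] [TopologicalSpace α] (p : ℕ)
    (i : Fin (p ^ 2 + p)) (F : Matrix (Fin 2) (Fin 2) ℤ → α) :
    ∑' lam : {l : Matrix (Fin 2) (Fin 2) ℤ // (p : ℤ) ^ 2 ∣ l 0 0}, F ((Lp2 p i)ᵀ * lam.1)
      = ∑' μ, {μ | (p : ℤ) ^ 2 ∣ ((Lp2 p i)ᵀ.adjugate * μ) 0 0}.indicator F μ :=
  tsum_subtype_mul_left_of_det_eq_one _ (by rw [det_transpose, det_Lp2]) _ F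

theorem sum_indicator_Lp2 {p : ℕ} (hp : p.Prime) {α : Type*} [CommRing α]
    (F : Matrix (Fin 2) (Fin 2) ℤ → α) (μ : Matrix (Fin 2) (Fin 2) ℤ) :
    ∑ i, {μ | (p : ℤ) ^ 2 ∣ ((Lp2 p i)ᵀ.adjugate * μ) 0 0}.indicator F μ
      = F μ + ((p : α) - 1) * {μ | (p : ℤ) ∣ μ 0 0 ∧ (p : ℤ) ∣ μ 1 0}.indicator F μ
        + (p : α) ^ 2 * {μ | (p : ℤ) ^ 2 ∣ μ 0 0 ∧ (p : ℤ) ^ 2 ∣ μ 1 0}.indicator F μ := by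
  have hdvd {x : ℤ} : (p : ℤ) ^ 2 ∣ x → (p : ℤ) ∣ x := (dvd_pow_self _ two_ne_zero).trans
  rw [sum_indicator_eq_sum_filter, sum_const]
  change #{i | (p : ℤ) ^ 2 ∣ ((Lp2 p i)ᵀ.adjugate *ᵥ fun k => μ k 0) 0} • F μ = _
  rw [card_filter_Lp2 hp]
  by_cases h2 : (p : ℤ) ^ 2 ∣ μ 0 0 ∧ (p : ℤ) ^ 2 ∣ μ 1 0
  · have h1 : (p : ℤ) ∣ μ 0 0 ∧ (p : ℤ) ∣ μ 1 0 := ⟨hdvd h2.1, hdvd h2.2⟩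
    simp only [if_pos h2, Set.indicator_apply, Set.mem_ofPred_eq, if_pos h1, nsmul_eq_mul]
    push_cast
    ring
  by_cases h1 : (p : ℤ) ∣ μ 0 0 ∧ (p : ℤ) ∣ μ 1 0
  · simp only [if_neg h2, if_pos h1, Set.indicator_apply, Set.mem_ofPred_eq, nsmul_eq_mul]
    ring
  · simp [h1, h2]

end Lp2

theorem statement_3_general (p : ℕ) (hp : p.Prime)
    (F : Matrix (Fin 2) (Fin 2) ℤ → ℂ)
    (hF : Summable F) :
    ∑ i : Fin (p ^ 2 + p), ∑' lam : {l : Matrix (Fin 2) (Fin 2) ℤ // (p : ℤ) ^ 2 ∣ l 0 0},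
        F ((Lp2 p i)ᵀ * lam.1)
      = (∑' lam : Matrix (Fin 2) (Fin 2) ℤ, F lam)
        + ((p : ℂ) - 1) * (∑' lam : Matrix (Fin 2) (Fin 2) ℤ, F (lam * !![(p : ℤ), 0; 0, 1]))
        + (p : ℂ) ^ 2 *
            ∑' lam : Matrix (Fin 2) (Fin 2) ℤ, F (lam * !![(p : ℤ) ^ 2, 0; 0, 1]) := by
  have hp0 : (p : ℤ) ≠ 0 := by exact_mod_cast hp.ne_zero
  simp_rw [tsum_transpose_Lp2_mul, tsum_mul_diag_fin_two _ hp0,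
    tsum_mul_diag_fin_two _ (pow_ne_zero 2 hp0)]
  rw [← Summable.tsum_finsetSum fun i _ => hF.indicator _, ← tsum_mul_left, ← tsum_mul_left,
    ← hF.tsum_add ((hF.indicator _).mul_left _),
    ← (hF.add ((hF.indicator _).mul_left _)).tsum_add ((hF.indicator _).mul_left _)]
  simp_rw [sum_indicator_Lp2 hp]

/-- `Σ_{A ∈ L(p²)} Σ_{λ ∈ M} F(ᵗA λ) = Σ_λ F(λ) + (p-1) Σ_λ F(λ·diag(p,1)) + p² Σ_λ F(λ·diag(p²,1))`,
where `M = { λ ∈ ℤ^{2×2} : λ₁₁ ∈ p²ℤ }` and all sums converge absolutely. -/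
theorem statement_3 (p : ℕ) (hp : p.Prime)
    (F : Matrix (Fin 2) (Fin 2) ℤ → ℂ)
    (hF : Summable F)
    (hF1 : ∀ i : Fin (p ^ 2 + p),
      Summable (fun lam : {l : Matrix (Fin 2) (Fin 2) ℤ // (p : ℤ) ^ 2 ∣ l 0 0} =>
        F ((Lp2 p i)ᵀ * lam.1)))
    (hF2 : Summable (fun lam : Matrix (Fin 2) (Fin 2) ℤ => F (lam * !![(p : ℤ), 0; 0, 1])))
    (hF3 : Summable (fun lam : Matrix (Fin 2) (Fin 2) ℤ =>
      F (lam * !![(p : ℤ) ^ 2, 0; 0, 1]))) :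
    ∑ i : Fin (p ^ 2 + p), ∑' lam : {l : Matrix (Fin 2) (Fin 2) ℤ // (p : ℤ) ^ 2 ∣ l 0 0},
        F ((Lp2 p i)ᵀ * lam.1)
      = (∑' lam : Matrix (Fin 2) (Fin 2) ℤ, F lam)
        + ((p : ℂ) - 1) * (∑' lam : Matrix (Fin 2) (Fin 2) ℤ, F (lam * !![(p : ℤ), 0; 0, 1]))
        + (p : ℂ) ^ 2 *
            ∑' lam : Matrix (Fin 2) (Fin 2) ℤ, F (lam * !![(p : ℤ) ^ 2, 0; 0, 1]) :=
  statement_3_general p hp F hF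
end

section
/- Let p be an odd prime, M = [[l, r/2],[r/2, 1]] a positive definite half-integral 2×2 symmetric matrix with l, r ∈ ℤ, and set m = det(2M) = 4l − r². For a row vector λ = (λ₁, λ₂) ∈ ℤ^{1×2}, define G(λ) = Σ_{x ∈ (ℤ/pℤ)^×} e((λ M ᵗλ) x / p). Then Σ_{u ∈ ℤ/pℤ} G(λ + (0,u)) equals 0 if p | λ₁, and equals p · ((−m)/p) (Legendre symbol) if p ∤ λ₁. -/
/-!
Summed over the units `t`, the characters `e(Q t / p)` form the Ramanujan sum `c_p(Q)`, which is
`p - 1` or `-1` according as `p ∣ Q`. Summing over `u` therefore gives `p` times the number of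
roots of the quadratic `u ↦ (λ + (0,u)) M ᵗ(λ + (0,u))` modulo `p`, minus `p`; that root count is
`1 + (D/p)` with discriminant `D = (2λ₂ + rλ₁)² - 4(lλ₁² + rλ₁λ₂ + λ₂²) = -mλ₁²`.
-/

open Finset

lemma ZMod.sum_range_natCast {M : Type*} [AddCommMonoid M] (n : ℕ) [NeZero n] (f : ZMod n → M) :
    ∑ u ∈ range n, f u = ∑ v : ZMod n, f v :=
  sum_nbij' (↑) ZMod.val (fun _ _ ↦ mem_univ _) (fun v _ ↦ mem_range.mpr v.val_lt)
    (fun _ hu ↦ ZMod.val_cast_of_lt (mem_range.mp hu)) (fun v _ ↦ ZMod.natCast_zmod_val v)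
    (fun _ _ ↦ rfl)

lemma ZMod.exp_intCast_mul_val (n : ℕ) [NeZero n] (j : ℤ) (t : ZMod n) :
    Complex.exp (2 * Real.pi * Complex.I * ((j * (t.val : ℤ) : ℤ) : ℂ) / n) =
      ZMod.stdAddChar ((j : ZMod n) * t) := by
  rw [← ZMod.stdAddChar_coe]
  push_cast [ZMod.natCast_val, ZMod.cast_id]
  rfl

lemma legendreSym.mul_sq (p : ℕ) [Fact p.Prime] (a b : ℤ) :
    legendreSym p (a * b ^ 2) = if (p : ℤ) ∣ b then 0 else legendreSym p a := by
  split_ifs with hb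
  · rw [legendreSym.eq_zero_iff]
    push_cast
    rw [(ZMod.intCast_zmod_eq_zero_iff_dvd b p).mpr hb]
    ring
  · rw [legendreSym.mul, legendreSym.sq_one' p (mt (ZMod.intCast_zmod_eq_zero_iff_dvd b p).mp hb),
      mul_one]

lemma Fintype.sum_units_eq_sum_sub_zero {F M : Type*} [GroupWithZero F] [Fintype F] [DecidableEq F]
    [Fintype Fˣ] [AddCommGroup M] (f : F → M) :
    ∑ t : Fˣ, f t = ∑ x, f x - f 0 := by
  calc ∑ t : Fˣ, f t = ∑ x : {x : F // x ≠ 0}, f x :=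
        Fintype.sum_equiv unitsEquivNeZero _ _ fun _ ↦ rfl
    _ = ∑ x ∈ univ.erase 0, f x := (sum_subtype _ (by simp) f).symm
    _ = ∑ x, f x - f 0 := sum_erase_eq_sub (mem_univ 0)

theorem AddChar.sum_units_mulShift {F R : Type*} [Field F] [Fintype F] [DecidableEq F]
    [CommRing R] [IsDomain R] {ψ : AddChar F R} (hψ : ψ.IsPrimitive) (a : F) :
    ∑ t : Fˣ, ψ (a * t) = (if a = 0 then (Fintype.card F : R) else 0) - 1 := by
  simp_rw [mul_comm a]
  rw [Fintype.sum_units_eq_sum_sub_zero (fun x ↦ ψ (x * a)), sum_mulShift a hψ, zero_mul,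
    map_zero_eq_one, Nat.cast_ite, Nat.cast_zero]

theorem card_quadratic_eq_zero {F : Type*} [Field F] [Fintype F] [DecidableEq F]
    (hF : ringChar F ≠ 2) {a : F} (ha : a ≠ 0) (b c : F) :
    (#{x | a * (x * x) + b * x + c = 0} : ℤ) = quadraticChar F (discrim a b c) + 1 := by
  have : NeZero (2 : F) := ⟨Ring.two_ne_zero hF⟩
  have h2a : 2 * a ≠ 0 := mul_ne_zero two_ne_zero ha
  rw [← quadraticChar_card_sqrts hF, Set.toFinset_ofPred]
  congr 1
  refine card_nbij' (fun x ↦ 2 * a * x + b) (fun y ↦ (y - b) / (2 * a)) ?_ ?_ ?_ ?_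
  · intro x hx
    simp_all [quadratic_eq_zero_iff_discrim_eq_sq ha]
  · intro y hy
    simp_all [quadratic_eq_zero_iff_discrim_eq_sq ha, mul_div_cancel₀ _ h2a]
  · intro x _
    field_simp
    ring
  · intro y _
    field_simp
    ring

theorem sum_sum_units_addChar_quadratic {F R : Type*} [Field F] [Fintype F] [DecidableEq F]
    [CommRing R] [IsDomain R] {ψ : AddChar F R} (hψ : ψ.IsPrimitive) (hF : ringChar F ≠ 2)
    {a : F} (ha : a ≠ 0) (b c : F) :
    ∑ x : F, ∑ t : Fˣ, ψ ((a * (x * x) + b * x + c) * t) =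
      Fintype.card F * quadraticChar F (discrim a b c) := by
  have hcard := congrArg (Int.cast : ℤ → R) (card_quadratic_eq_zero hF ha b c)
  push_cast at hcard
  simp_rw [AddChar.sum_units_mulShift hψ]
  rw [sum_sub_distrib, sum_ite, sum_const_zero, add_zero, sum_const, sum_const, nsmul_eq_mul,
    hcard, card_univ, nsmul_one]
  ring

theorem statement_7_general (p : ℕ) [Fact p.Prime] (hodd : p ≠ 2)
    (l r : ℤ)
    (m : ℤ) (hm : m = 4 * l - r ^ 2)
    (lam₁ lam₂ : ℤ) :
    ∑ u ∈ Finset.range p, ∑ t : (ZMod p)ˣ,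
        Complex.exp (2 * Real.pi * Complex.I *
          ((((l * lam₁ ^ 2 + r * lam₁ * (lam₂ + (u : ℤ)) + (lam₂ + (u : ℤ)) ^ 2)
              * (((t : ZMod p).val : ℤ)) : ℤ) : ℂ)) / (p : ℂ))
      = if (p : ℤ) ∣ lam₁ then 0 else (p : ℂ) * ((legendreSym p (-m) : ℤ) : ℂ) := by
  have hF : ringChar (ZMod p) ≠ 2 := by rwa [ZMod.ringChar_zmod_n]
  have hQ (v : ZMod p) : (l * lam₁ ^ 2 + r * lam₁ * (lam₂ + v) + (lam₂ + v) ^ 2 : ZMod p) =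
      1 * (v * v) + (2 * lam₂ + r * lam₁) * v + (l * lam₁ ^ 2 + r * lam₁ * lam₂ + lam₂ ^ 2) := by
    ring
  have hdiscrim : discrim (1 : ZMod p) (2 * lam₂ + r * lam₁)
      (l * lam₁ ^ 2 + r * lam₁ * lam₂ + lam₂ ^ 2) = ((-m * lam₁ ^ 2 : ℤ) : ZMod p) := by
    rw [discrim, hm]; push_cast; ring
  simp only [ZMod.exp_intCast_mul_val]
  push_cast
  rw [ZMod.sum_range_natCast p (fun v ↦ ∑ t : (ZMod p)ˣ, ZMod.stdAddChar
    ((l * lam₁ ^ 2 + r * lam₁ * (lam₂ + v) + (lam₂ + v) ^ 2 : ZMod p) * (t : ZMod p)))]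
  simp_rw [hQ]
  rw [sum_sum_units_addChar_quadratic (ZMod.isPrimitive_stdAddChar p) hF one_ne_zero, hdiscrim,
    ZMod.card, ← legendreSym, legendreSym.mul_sq]
  split_ifs <;> simp

/-- Let `p` be an odd prime and `M = [[l, r/2],[r/2, 1]]` positive
definite half-integral with `m = det(2M) = 4l − r²`. For a row vector `λ = (λ₁,λ₂) ∈ ℤ²`,
with `G(λ) = Σ_{x ∈ (ℤ/pℤ)ˣ} e((λMᵗλ)x/p)` (where `λMᵗλ = lλ₁² + rλ₁λ₂ + λ₂²`), one has
`Σ_{u mod p} G(λ + (0,u)) = 0` if `p ∣ λ₁`, and `= p·((−m)/p)` (Legendre symbol)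
otherwise. -/
theorem statement_7 (p : ℕ) [Fact p.Prime] (hodd : p ≠ 2)
    (l r : ℤ) (hpos : 0 < 4 * l - r ^ 2)
    (m : ℤ) (hm : m = 4 * l - r ^ 2)
    (lam₁ lam₂ : ℤ) :
    ∑ u ∈ Finset.range p, ∑ t : (ZMod p)ˣ,
        Complex.exp (2 * Real.pi * Complex.I *
          ((((l * lam₁ ^ 2 + r * lam₁ * (lam₂ + (u : ℤ)) + (lam₂ + (u : ℤ)) ^ 2)
              * (((t : ZMod p).val : ℤ)) : ℤ) : ℂ)) / (p : ℂ))
      = if (p : ℤ) ∣ lam₁ then 0 else (p : ℂ) * ((legendreSym p (-m) : ℤ) : ℂ) :=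
  statement_7_general p hodd l r m hm lam₁ lam₂
end

section
/- Let p be an odd prime, u ∈ ℤ with p ∤ u, and consider the diagonal form M = diag(u, 1) over ℤ/pℤ. For λ ∈ (ℤ/pℤ)^{2×2}, define the rank-1 Gauss sum G₁(λ) = Σ_{x symmetric 2×2 over ℤ/pℤ, rank x = 1} e(tr(M ᵗλ x λ)/p). Then: (i) if λ = 0, G₁(λ) = p² − 1; (ii) if rank λ = 2, G₁(λ) = ((−u)/p)·p − 1; (iii) if rank λ = 1 and λ ≡ (λ', t λ') columnwise with u + t² ≡ 0 mod p, then G₁(λ) = p² − 1; (iv) if rank λ = 1 and λ ≡ (λ', t λ') with u + t² ≢ 0 mod p, or λ ≡ (0, λ') with λ' ≠ 0, then G₁(λ) = −1. -/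
/-!
A symmetric `2 × 2` matrix of rank one is `c • w wᵀ` for a unique `c ≠ 0` and a unique
normalised representative `w` of a point of `ℙ¹`, and `tr(M λᵀ (c • w wᵀ) λ) = c · Q(wλ)`
with `Q(v) = u v₀² + v₁²`. Summing the additive character over `c ≠ 0` gives `p - 1` or `-1`
according as `Q(wλ)` vanishes, so `G₁(λ) = p N - p - 1`, where `N` is the number of points of
`ℙ¹` at which `Q(wλ) = 0`. If `Q(wλ)` vanishes identically, `N = p + 1`; if `λ` has rank one,
`Q(wλ)` is a nonzero multiple of the square of a nonzero linear form, so `N = 1`; if `λ` is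
invertible, `N` is the number of projective zeros of `Q`, namely `2` if `-u` is a square (`Q`
splits into two independent linear forms) and `0` otherwise.
-/

open Matrix
open scoped Classical

/-- The rank-one Gauss sum
`G₁(λ) = Σ_{x symmetric, rank x = 1} e(tr(diag(u,1) ᵗλ x λ)/p)` over `ℤ/pℤ`. -/
noncomputable def rankOneGaussSum (p : ℕ) [NeZero p] (u : ℤ)
    (lam : Matrix (Fin 2) (Fin 2) (ZMod p)) : ℂ :=
  ∑ x : Fin 2 → Fin 2 → ZMod p,
    if (Matrix.of x).IsSymm ∧ (Matrix.of x).rank = 1 then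
      Complex.exp (2 * Real.pi * Complex.I *
        ((((Matrix.diagonal ![(u : ZMod p), 1] * lamᵀ * Matrix.of x * lam).trace).val : ℕ) : ℂ)
          / (p : ℂ))
    else 0

open Finset

namespace Matrix

variable {K : Type*} [Field K] {n : Type*} [Fintype n]

theorem rank_eq_zero_iff {m : Type*} {A : Matrix m n K} : A.rank = 0 ↔ A = 0 := by
  rw [rank, Submodule.finrank_eq_zero, LinearMap.range_eq_bot, ← toLin'_apply',
    LinearEquiv.map_eq_zero_iff]

theorem rank_eq_card_iff_det_ne_zero [DecidableEq n] {A : Matrix n n K} :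
    A.rank = Fintype.card n ↔ A.det ≠ 0 := by
  refine ⟨fun h => ?_, rank_of_det_ne_zero⟩
  have hrange : LinearMap.range A.mulVecLin = ⊤ :=
    Submodule.eq_top_of_finrank_eq (by rw [Module.finrank_fintype_fun_eq_card]; exact h)
  have hsurj : Function.Surjective A.mulVec := LinearMap.range_eq_top.mp hrange
  exact ((isUnit_iff_isUnit_det A).mp (mulVec_surjective_iff_isUnit.mp hsurj)).ne_zero

theorem rank_eq_one_iff_of_fin_two {A : Matrix (Fin 2) (Fin 2) K} :
    A.rank = 1 ↔ A ≠ 0 ∧ A.det = 0 := by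
  have h2 : A.rank ≤ 2 := by simpa using A.rank_le_card_width
  rw [Ne, ← rank_eq_zero_iff, ← not_ne_iff (b := (0 : K)), ← rank_eq_card_iff_det_ne_zero,
    Fintype.card_fin]
  omega

end Matrix

namespace RankOneGaussSum

variable {K : Type*} [Field K]

/-- `Option K` models `ℙ¹(K)`, `none` being the point at infinity. -/
def projLineRep : Option K → Fin 2 → K
  | none => ![0, 1]
  | some s => ![1, s]

theorem projLineRep_ne_zero (o : Option K) : projLineRep o ≠ 0 := by
  cases o <;> simp [projLineRep, funext_iff, Fin.forall_fin_two]

theorem isSymm_smul_vecMulVec_self {n : Type*} (c : K) (w : n → K) :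
    (c • vecMulVec w w).IsSymm := by
  rw [IsSymm, transpose_smul, transpose_vecMulVec]

theorem rank_smul_vecMulVec_self {c : K} (hc : c ≠ 0) {w : Fin 2 → K} (hw : w ≠ 0) :
    (c • vecMulVec w w).rank = 1 := by
  obtain ⟨i, hi⟩ := Function.ne_iff.mp hw
  refine rank_eq_one_iff_of_fin_two.mpr ⟨fun h => ?_, ?_⟩
  · exact hi (by simpa [hc, vecMulVec_apply] using congrFun₂ h i i)
  · rw [det_fin_two]
    simp only [Matrix.smul_apply, vecMulVec_apply, smul_eq_mul]
    ring

noncomputable def rankOneSymmCoord (x : Matrix (Fin 2) (Fin 2) K) : K × Option K :=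
  if x 0 0 ≠ 0 then (x 0 0, some (x 0 1 / x 0 0)) else (x 1 1, none)

theorem rankOneSymmCoord_smul_vecMulVec {c : K} (hc : c ≠ 0) (o : Option K) :
    rankOneSymmCoord (c • vecMulVec (projLineRep o) (projLineRep o)) = (c, o) := by
  cases o <;> simp [rankOneSymmCoord, projLineRep, hc]

theorem rankOneSymmCoord_spec {x : Matrix (Fin 2) (Fin 2) K}
    (hx : x.IsSymm ∧ x.rank = 1) :
    (rankOneSymmCoord x).1 ≠ 0 ∧
      (rankOneSymmCoord x).1 • vecMulVec (projLineRep (rankOneSymmCoord x).2)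
        (projLineRep (rankOneSymmCoord x).2) = x := by
  obtain ⟨hsymm, hrank⟩ := hx
  obtain ⟨hne, hdet⟩ := rank_eq_one_iff_of_fin_two.mp hrank
  have h10 : x 1 0 = x 0 1 := hsymm.apply 0 1
  rw [det_fin_two] at hdet
  by_cases h00 : x 0 0 = 0
  · have h01 : x 0 1 = 0 := by simpa [h00, h10] using hdet
    have h11 : x 1 1 ≠ 0 := fun h11 => hne (by ext i j; fin_cases i <;> fin_cases j <;> simp [*])
    rw [rankOneSymmCoord, if_neg (not_not.mpr h00)]
    refine ⟨h11, ?_⟩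
    ext i j; fin_cases i <;> fin_cases j <;> simp [projLineRep, *]
  · rw [rankOneSymmCoord, if_pos h00]
    refine ⟨h00, ?_⟩
    ext i j; fin_cases i <;> fin_cases j <;> simp [projLineRep, h10] <;> field_simp
    linear_combination -hdet - x 0 1 * h10

def diagForm (u : K) (v : Fin 2 → K) : K := u * v 0 ^ 2 + v 1 ^ 2

theorem trace_diagonal_mul_smul_vecMulVec_mul (u c : K) (lam : Matrix (Fin 2) (Fin 2) K)
    (w : Fin 2 → K) :
    (diagonal ![u, 1] * lamᵀ * (c • vecMulVec w w) * lam).trace =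
      c * diagForm u (w ᵥ* lam) := by
  simp [trace, mul_apply, Fin.sum_univ_two, diagForm, vecMul, dotProduct, vecMulVec_apply]
  ring

theorem diagForm_ne_zero {u : K} (hu : ¬IsSquare (-u)) {v : Fin 2 → K} (hv : v ≠ 0) :
    diagForm u v ≠ 0 := by
  intro h
  by_cases h0 : v 0 = 0
  · have h1 : v 1 = 0 := by simpa [diagForm, h0] using h
    exact hv (funext fun i => by fin_cases i <;> assumption)
  · rw [diagForm] at h
    exact hu ⟨v 1 / v 0, by field_simp; linear_combination -h⟩

theorem diagForm_of_eq_mul {u t : K} {v : Fin 2 → K} (hv : v 1 = t * v 0) :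
    diagForm u v = (u + t ^ 2) * v 0 ^ 2 := by
  rw [diagForm, hv]; ring

theorem diagForm_eq_mul {u m : K} (hm : -u = m * m) (v : Fin 2 → K) :
    diagForm u v = (v 1 - m * v 0) * (v 1 + m * v 0) := by
  rw [diagForm]; linear_combination (-(v 0 ^ 2)) * hm

theorem vecMul_one_eq_mul_vecMul_zero {t : K} {lam : Matrix (Fin 2) (Fin 2) K}
    (ht : ∀ i, lam i 1 = t * lam i 0) (w : Fin 2 → K) :
    (w ᵥ* lam) 1 = t * (w ᵥ* lam) 0 := by
  simp [vecMul, dotProduct, Fin.sum_univ_two, ht]; ring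

variable [Fintype K] [DecidableEq K]

theorem sum_isSymm_rank_eq_one {M : Type*} [AddCommMonoid M]
    (f : Matrix (Fin 2) (Fin 2) K → M) :
    ∑ x with x.IsSymm ∧ x.rank = 1, f x =
      ∑ c ∈ univ.erase (0 : K), ∑ o : Option K,
        f (c • vecMulVec (projLineRep o) (projLineRep o)) := by
  rw [← sum_product']
  refine sum_nbij' rankOneSymmCoord
    (fun co => co.1 • vecMulVec (projLineRep co.2) (projLineRep co.2)) ?_ ?_ ?_ ?_ ?_
  · intro x hx
    simpa using (rankOneSymmCoord_spec (mem_filter.mp hx).2).1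
  · rintro ⟨c, o⟩ hco
    have hc : c ≠ 0 := by simpa using hco
    exact mem_filter.mpr ⟨mem_univ _, isSymm_smul_vecMulVec_self c _,
      rank_smul_vecMulVec_self hc (projLineRep_ne_zero o)⟩
  · intro x hx
    exact (rankOneSymmCoord_spec (mem_filter.mp hx).2).2
  · rintro ⟨c, o⟩ hco
    exact rankOneSymmCoord_smul_vecMulVec (by simpa using hco) o
  · intro x hx
    rw [(rankOneSymmCoord_spec (mem_filter.mp hx).2).2]

def isotropicLineCount (u : K) (lam : Matrix (Fin 2) (Fin 2) K) : ℕ :=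
  #{o : Option K | diagForm u (projLineRep o ᵥ* lam) = 0}

theorem card_filter_projLineRep_dotProduct_eq_zero {a : Fin 2 → K} (ha : a ≠ 0) :
    #{o : Option K | projLineRep o ⬝ᵥ a = 0} = 1 := by
  rw [card_eq_one]
  by_cases h1 : a 1 = 0
  · have h0 : a 0 ≠ 0 := fun h0 => ha (funext fun i => by fin_cases i <;> assumption)
    refine ⟨none, ?_⟩
    ext (_ | s) <;> simp [projLineRep, dotProduct, h0, h1]
  · refine ⟨some (-a 0 / a 1), ?_⟩
    ext (_ | s) <;> simp [projLineRep, dotProduct, h1]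
    field_simp
    constructor <;> intro h <;> linear_combination h

theorem card_filter_projLineRep_dotProduct_mul_eq_zero {a b : Fin 2 → K}
    (hab : a 0 * b 1 - a 1 * b 0 ≠ 0) :
    #{o : Option K | (projLineRep o ⬝ᵥ a) * (projLineRep o ⬝ᵥ b) = 0} = 2 := by
  have ha : a ≠ 0 := by rintro rfl; simp at hab
  have hb : b ≠ 0 := by rintro rfl; simp at hab
  simp_rw [mul_eq_zero, filter_or]
  rw [card_union_of_disjoint, card_filter_projLineRep_dotProduct_eq_zero ha,
    card_filter_projLineRep_dotProduct_eq_zero hb]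
  rw [disjoint_filter]
  intro o _ hoa hob
  refine projLineRep_ne_zero o (eq_zero_of_mulVec_eq_zero (M := of ![a, b]) ?_ ?_)
  · simpa [det_fin_two] using hab
  · rw [dotProduct_comm] at hoa hob
    ext i
    fin_cases i
    exacts [hoa, hob]

theorem isotropicLineCount_of_forall {u : K} {lam : Matrix (Fin 2) (Fin 2) K}
    (h : ∀ w, diagForm u (w ᵥ* lam) = 0) : isotropicLineCount u lam = Fintype.card K + 1 := by
  rw [isotropicLineCount, filter_true_of_mem fun o _ => h _, card_univ, Fintype.card_option]

theorem isotropicLineCount_of_col_eq_smul {u t : K} {lam : Matrix (Fin 2) (Fin 2) K}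
    (ht : ∀ i, lam i 1 = t * lam i 0) (hcol : lamᵀ 0 ≠ 0) (hut : u + t ^ 2 ≠ 0) :
    isotropicLineCount u lam = 1 := by
  refine (congrArg card (filter_congr fun o _ => ?_)).trans
    (card_filter_projLineRep_dotProduct_eq_zero hcol)
  rw [diagForm_of_eq_mul (vecMul_one_eq_mul_vecMul_zero ht _)]
  simp only [mul_eq_zero, hut, false_or, pow_eq_zero_iff two_ne_zero]
  rfl

theorem isotropicLineCount_of_col_zero {u : K} {lam : Matrix (Fin 2) (Fin 2) K}
    (h0 : lamᵀ 0 = 0) (h1 : lamᵀ 1 ≠ 0) : isotropicLineCount u lam = 1 := by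
  refine (congrArg card (filter_congr fun o _ => ?_)).trans
    (card_filter_projLineRep_dotProduct_eq_zero h1)
  have hv0 : (projLineRep o ᵥ* lam) 0 = 0 := by
    change projLineRep o ⬝ᵥ lamᵀ 0 = 0
    rw [h0, dotProduct_zero]
  rw [diagForm, hv0, zero_pow two_ne_zero, mul_zero, zero_add, pow_eq_zero_iff two_ne_zero]
  rfl

theorem isotropicLineCount_of_det_ne_zero_of_isSquare {u m : K}
    {lam : Matrix (Fin 2) (Fin 2) K} (hdet : lam.det ≠ 0) (h2 : (2 : K) ≠ 0) (hu : u ≠ 0)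
    (hm : -u = m * m) : isotropicLineCount u lam = 2 := by
  have hm0 : m ≠ 0 := by rintro rfl; simp [hu] at hm
  set a := lamᵀ 1 - m • lamᵀ 0
  set b := lamᵀ 1 + m • lamᵀ 0
  have hab : a 0 * b 1 - a 1 * b 0 = -(2 * m) * lam.det := by
    simp [a, b, det_fin_two]; ring
  refine (congrArg card (filter_congr fun o _ => ?_)).trans
    (card_filter_projLineRep_dotProduct_mul_eq_zero (a := a) (b := b)
      (by rw [hab]; exact mul_ne_zero (neg_ne_zero.mpr (mul_ne_zero h2 hm0)) hdet))
  rw [diagForm_eq_mul hm]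
  simp only [a, b, dotProduct_sub, dotProduct_add, dotProduct_smul, smul_eq_mul]
  rfl

theorem isotropicLineCount_of_det_ne_zero_of_not_isSquare {u : K}
    {lam : Matrix (Fin 2) (Fin 2) K} (hdet : lam.det ≠ 0) (hu : ¬IsSquare (-u)) :
    isotropicLineCount u lam = 0 := by
  rw [isotropicLineCount, card_eq_zero, filter_eq_empty_iff]
  exact fun o _ => diagForm_ne_zero hu fun h =>
    projLineRep_ne_zero o (eq_zero_of_vecMul_eq_zero hdet h)

theorem isotropicLineCount_of_det_ne_zero {p : ℕ} [Fact p.Prime] (hp : p ≠ 2) {u : ℤ}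
    (hu : (u : ZMod p) ≠ 0) {lam : Matrix (Fin 2) (Fin 2) (ZMod p)} (hdet : lam.det ≠ 0) :
    (isotropicLineCount (u : ZMod p) lam : ℤ) = 1 + legendreSym p (-u) := by
  by_cases hsq : IsSquare ((-u : ℤ) : ZMod p)
  · rw [(legendreSym.eq_one_iff p (by simpa using hu)).mpr hsq]
    obtain ⟨m, hm⟩ := hsq
    have h2 : (2 : ZMod p) ≠ 0 := Ring.two_ne_zero (by rwa [ZMod.ringChar_zmod_n])
    rw [isotropicLineCount_of_det_ne_zero_of_isSquare hdet h2 hu (by simpa using hm)]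
    rfl
  · rw [(legendreSym.eq_neg_one_iff p).mpr hsq,
      isotropicLineCount_of_det_ne_zero_of_not_isSquare hdet (by simpa using hsq)]
    rfl

theorem sum_erase_zero_stdAddChar_mul (p : ℕ) [Fact p.Prime] (q : ZMod p) :
    ∑ c ∈ univ.erase 0, ZMod.stdAddChar (c * q) = (if q = 0 then (p : ℂ) else 0) - 1 := by
  rw [sum_erase_eq_sub (mem_univ _), AddChar.sum_mulShift q (ZMod.isPrimitive_stdAddChar p),
    zero_mul, AddChar.map_zero_eq_one, ZMod.card, Nat.cast_ite, Nat.cast_zero]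

theorem rankOneGaussSum_eq (p : ℕ) [Fact p.Prime] (u : ℤ)
    (lam : Matrix (Fin 2) (Fin 2) (ZMod p)) :
    rankOneGaussSum p u lam = p * isotropicLineCount (u : ZMod p) lam - p - 1 := by
  have hψ (a : ZMod p) :
      Complex.exp (2 * Real.pi * Complex.I * (a.val : ℂ) / p) = ZMod.stdAddChar a := by
    rw [ZMod.stdAddChar_apply, ZMod.toCircle_apply]
  have hmat : rankOneGaussSum p u lam = ∑ x : Matrix (Fin 2) (Fin 2) (ZMod p),
      if x.IsSymm ∧ x.rank = 1 then
        ZMod.stdAddChar (diagonal ![(u : ZMod p), 1] * lamᵀ * x * lam).trace else 0 :=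
    Fintype.sum_equiv of _ _ fun x => by rw [hψ]
  rw [hmat, ← sum_filter, sum_isSymm_rank_eq_one, sum_comm]
  simp_rw [trace_diagonal_mul_smul_vecMulVec_mul, sum_erase_zero_stdAddChar_mul]
  rw [sum_sub_distrib, ← sum_filter, sum_const, sum_const, card_univ, Fintype.card_option,
    ZMod.card, isotropicLineCount, nsmul_eq_mul, nsmul_eq_mul]
  push_cast
  ring

end RankOneGaussSum

open RankOneGaussSum in
/-- Values of the rank-one Gauss sum `G₁(λ)` for `M = diag(u,1)`,
`p` an odd prime, `p ∤ u`. -/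
theorem statement_8 (p : ℕ) [Fact p.Prime] (hodd : p ≠ 2)
    (u : ℤ) (hu : ¬ (p : ℤ) ∣ u)
    (lam : Matrix (Fin 2) (Fin 2) (ZMod p)) :
    (lam = 0 → rankOneGaussSum p u lam = (p : ℂ) ^ 2 - 1) ∧
    (lam.rank = 2 →
      rankOneGaussSum p u lam = ((legendreSym p (-u) : ℤ) : ℂ) * (p : ℂ) - 1) ∧
    (lam.rank = 1 → ∀ t : ZMod p, (∀ i, lam i 1 = t * lam i 0) →
      (u : ZMod p) + t ^ 2 = 0 → rankOneGaussSum p u lam = (p : ℂ) ^ 2 - 1) ∧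
    (lam.rank = 1 →
      ((∃ t : ZMod p, (∀ i, lam i 1 = t * lam i 0) ∧ (u : ZMod p) + t ^ 2 ≠ 0)
        ∨ (∀ i, lam i 0 = 0)) →
      rankOneGaussSum p u lam = -1) := by
  have hu' : (u : ZMod p) ≠ 0 := by rwa [Ne, ZMod.intCast_zmod_eq_zero_iff_dvd]
  have of_isotropic (h : ∀ w, diagForm (u : ZMod p) (w ᵥ* lam) = 0) :
      rankOneGaussSum p u lam = (p : ℂ) ^ 2 - 1 := by
    rw [rankOneGaussSum_eq, isotropicLineCount_of_forall h, ZMod.card]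
    push_cast
    ring
  refine ⟨fun h0 => of_isotropic fun w => by simp [h0, diagForm], fun h2 => ?_,
    fun _ t ht hut => of_isotropic fun w => ?_, fun h1 hcases => ?_⟩
  · have hdet : lam.det ≠ 0 := rank_eq_card_iff_det_ne_zero.mp (by simpa using h2)
    have hcount : (isotropicLineCount (u : ZMod p) lam : ℂ) = 1 + legendreSym p (-u) := by
      exact_mod_cast isotropicLineCount_of_det_ne_zero hodd hu' hdet
    rw [rankOneGaussSum_eq, hcount]
    ring
  · rw [diagForm_of_eq_mul (vecMul_one_eq_mul_vecMul_zero ht w), hut, zero_mul]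
  · have hcols : ¬(lamᵀ 0 = 0 ∧ lamᵀ 1 = 0) := fun h => (rank_eq_one_iff_of_fin_two.mp h1).1
      (transpose_eq_zero.mp (funext (Fin.forall_fin_two.mpr h)))
    have hcount : isotropicLineCount (u : ZMod p) lam = 1 := by
      rcases hcases with ⟨t, ht, hut⟩ | hcol
      · refine isotropicLineCount_of_col_eq_smul ht (fun h0 => hcols ⟨h0, ?_⟩) hut
        ext i
        rw [transpose_apply, ht i, show lam i 0 = 0 from congrFun h0 i, mul_zero, Pi.zero_apply]
      · exact isotropicLineCount_of_col_zero (funext hcol) fun h => hcols ⟨funext hcol, h⟩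
    rw [rankOneGaussSum_eq, hcount]
    push_cast
    ring
end

section
/- Let M = ᵗX · [[u, r/2],[r/2, 1]] · X with X = [[1,0],[x,1]], r ∈ {0,1}, over ℤ/2ℤ considerations. For λ ∈ ℤ^{2×2}, define G₁(λ) = Σ_{x symmetric 2×2 over ℤ/2ℤ, rank = 1} (−1)^{tr(2M ᵗλ x λ)} (interpreting e(a/2) = (−1)^a). Then in the case r = 0 (M = ᵗX diag(u,1) X): G₁(λ) = 3 if λᵗX ≡ 0 mod 2; G₁(λ) = −1 + 2(1+(−1)^{u+t}) if rank₂(λᵗX) = 1 and λᵗX ≡ (λ', tλ') mod 2; G₁(λ) = −1 if rank₂(λᵗX) = 1 with λᵗX ≡ (0,λ') mod 2, or if rank₂(λᵗX) = 2. -/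
open Matrix

/-- `X = [[1,0],[x,1]]`. -/
def Xmat (x : ℤ) : Matrix (Fin 2) (Fin 2) ℤ := !![1, 0; x, 1]

/-- `M = ᵗX · diag(u,1) · X` (the case `r = 0` of a half-integral binary form). -/
def Mmat (u x : ℤ) : Matrix (Fin 2) (Fin 2) ℤ :=
  (Xmat x)ᵀ * Matrix.diagonal ![u, 1] * Xmat x

/-- The rank-one Gauss sum at `p = 2`:
`G₁(λ) = Σ_{s symmetric rank-1 over ℤ/2ℤ} (−1)^{tr(M ᵗλ s λ)}`, where the three symmetric
rank-one matrices over `ℤ/2ℤ` are lifted to `[[1,0],[0,0]]`, `[[0,0],[0,1]]`,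
`[[1,1],[1,1]]`, and `e(a/2) = (−1)^a`. -/
noncomputable def gaussSumTwo (u x : ℤ) (lam : Matrix (Fin 2) (Fin 2) ℤ) : ℚ :=
  (-1 : ℚ) ^ ((Mmat u x * lamᵀ * !![(1 : ℤ), 0; 0, 0] * lam).trace)
    + (-1 : ℚ) ^ ((Mmat u x * lamᵀ * !![(0 : ℤ), 0; 0, 1] * lam).trace)
    + (-1 : ℚ) ^ ((Mmat u x * lamᵀ * !![(1 : ℤ), 1; 1, 1] * lam).trace)

/-!
For rank-one `s = v ᵗv` the exponent is `tr (M ᵗλ v ᵗv λ) = Q (ᵗY v)` with `Y = λ ᵗX` and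
`Q (a, b) = u a² + b²`, because `X ᵗλ = ᵗY`. Modulo 2 squaring is the identity, so `v ↦ Q (ᵗY v)`
becomes the linear form `v ↦ v ⬝ Y (u, 1)`, and `G₁(λ)` is the sum of a character of `(ℤ/2ℤ)²` over
its three nonzero vectors: `3` if `Y (u, 1) ≡ 0` and `-1` otherwise. Mod 2, `Y (u, 1)` is
`(u + t) λ'` in the second case, the nonzero column `λ'` in the third, and nonzero by injectivity
of `Y` in the fourth.
-/

lemma zmod_two_eq_zero_or_eq_one (z : ZMod 2) : z = 0 ∨ z = 1 := by revert z; decide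

lemma neg_one_zpow_eq_pow_val (n : ℤ) : (-1 : ℚ) ^ n = (-1) ^ (n : ZMod 2).val := by
  rcases Int.even_or_odd n with h | h
  · rw [h.neg_one_zpow, ZMod.intCast_eq_zero_iff_even.mpr h, ZMod.val_zero, pow_zero]
  · rw [h.neg_one_zpow, ZMod.intCast_eq_one_iff_odd.mpr h, ZMod.val_one, pow_one]

lemma neg_one_pow_val_add_add_eq_ite (a b : ZMod 2) :
    (-1 : ℚ) ^ a.val + (-1) ^ b.val + (-1) ^ (a + b).val = if a = 0 ∧ b = 0 then 3 else -1 := by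
  rcases zmod_two_eq_zero_or_eq_one a with rfl | rfl <;>
    rcases zmod_two_eq_zero_or_eq_one b with rfl | rfl <;>
    simp only [add_zero, zero_add, show (1 + 1 : ZMod 2) = 0 from rfl, ZMod.val_zero, ZMod.val_one] <;>
    norm_num

lemma Matrix.mulVec_injective_of_rank_eq_card {K n : Type*} [Field K] [Fintype n] [DecidableEq n]
    {A : Matrix n n K} (hA : A.rank = Fintype.card n) : Function.Injective A.mulVec := by
  have hsurj : Function.Surjective A.mulVecLin := by
    rw [← LinearMap.range_eq_top]
    apply Submodule.eq_top_of_finrank_eq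
    rw [← Matrix.rank, hA, Module.finrank_fintype_fun_eq_card]
  exact LinearMap.injective_iff_surjective.mpr hsurj

lemma trace_Mmat_mul_vecMulVec_mul (u x : ℤ) (lam : Matrix (Fin 2) (Fin 2) ℤ) (v : Fin 2 → ℤ) :
    (Mmat u x * lamᵀ * vecMulVec v v * lam).trace =
      u * (v ᵥ* (lam * (Xmat x)ᵀ)) 0 ^ 2 + (v ᵥ* (lam * (Xmat x)ᵀ)) 1 ^ 2 := by
  simp only [Mmat, Xmat, vecMulVec, vecMul, dotProduct, trace_fin_two, mul_apply, transpose_apply,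
    of_apply, cons_val', cons_val_zero, cons_val_one, cons_val_fin_one, Fin.sum_univ_two,
    diagonal_apply_eq, diagonal_apply_ne, ne_eq, one_ne_zero, zero_ne_one, not_false_eq_true,
    one_mul, mul_one, zero_mul, mul_zero, add_zero, zero_add]
  ring

lemma intCast_trace_Mmat_mul_vecMulVec_mul (u x : ℤ) (lam : Matrix (Fin 2) (Fin 2) ℤ)
    (v : Fin 2 → ℤ) :
    ((Mmat u x * lamᵀ * vecMulVec v v * lam).trace : ZMod 2) =
      (Int.cast ∘ v) ⬝ᵥ ((lam * (Xmat x)ᵀ).map (Int.cast : ℤ → ZMod 2) *ᵥ ![(u : ZMod 2), 1]) := by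
  rw [trace_Mmat_mul_vecMulVec_mul]
  push_cast
  simp only [ZMod.pow_card]
  simp only [vecMul, dotProduct, Fin.sum_univ_two, Int.cast_add, Int.cast_mul, Function.comp_apply,
    mulVec_fin_two, map_apply, cons_val_zero, cons_val_one, cons_val_fin_one, mul_one]
  ring

lemma gaussSumTwo_eq_ite (u x : ℤ) (lam : Matrix (Fin 2) (Fin 2) ℤ) :
    gaussSumTwo u x lam =
      if (lam * (Xmat x)ᵀ).map (Int.cast : ℤ → ZMod 2) *ᵥ ![(u : ZMod 2), 1] = 0 then 3 else -1 := by
  set z := (lam * (Xmat x)ᵀ).map (Int.cast : ℤ → ZMod 2) *ᵥ ![(u : ZMod 2), 1]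
  have hsign (v : Fin 2 → ℤ) :
      (-1 : ℚ) ^ (Mmat u x * lamᵀ * vecMulVec v v * lam).trace = (-1) ^ ((Int.cast ∘ v) ⬝ᵥ z).val := by
    rw [neg_one_zpow_eq_pow_val, intCast_trace_Mmat_mul_vecMulVec_mul]
  have e₀ : !![(1 : ℤ), 0; 0, 0] = vecMulVec ![1, 0] ![1, 0] := by
    ext i j; fin_cases i <;> fin_cases j <;> rfl
  have e₁ : !![(0 : ℤ), 0; 0, 1] = vecMulVec ![0, 1] ![0, 1] := by
    ext i j; fin_cases i <;> fin_cases j <;> rfl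
  have e₂ : !![(1 : ℤ), 1; 1, 1] = vecMulVec ![1, 1] ![1, 1] := by
    ext i j; fin_cases i <;> fin_cases j <;> rfl
  rw [gaussSumTwo, e₀, e₁, e₂, hsign, hsign, hsign]
  simp only [dotProduct, Fin.sum_univ_two, Function.comp_apply, cons_val_zero, cons_val_one,
    cons_val_fin_one, Int.cast_zero, Int.cast_one, zero_mul, one_mul, add_zero, zero_add]
  rw [neg_one_pow_val_add_add_eq_ite]
  simp [funext_iff, Fin.forall_fin_two]

section TwoByTwo

variable {R : Type*} [CommSemiring R] {A : Matrix (Fin 2) (Fin 2) R}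

lemma mulVec_vecCons_one_eq_smul_col (a t : R) (ht : ∀ i, A i 1 = t * A i 0) :
    A *ᵥ ![a, 1] = (a + t) • A.col 0 := by
  ext i
  fin_cases i <;> simp [ht] <;> ring

lemma col_zero_ne_zero_of_col_one_eq_mul (hA : A ≠ 0) (t : R) (ht : ∀ i, A i 1 = t * A i 0) :
    A.col 0 ≠ 0 := by
  intro h
  apply hA
  ext i j
  have hi : A i 0 = 0 := congr_fun h i
  fin_cases j <;> simp [ht, hi]

lemma mulVec_vecCons_one_ne_zero_of_col_zero_eq_zero (hA : A ≠ 0) (a : R)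
    (h : ∀ i, A i 0 = 0) : A *ᵥ ![a, 1] ≠ 0 := by
  intro hz
  simp only [mulVec_fin_two, h, cons_val_zero, cons_val_one, cons_val_fin_one, zero_mul, mul_one,
    zero_add, cons_eq_zero_iff, zero_empty, and_true] at hz
  apply hA
  ext i j
  fin_cases i <;> fin_cases j <;> simp [h, hz]

end TwoByTwo

lemma ite_intCast_zmod_two_eq_zero (n : ℤ) :
    (if (n : ZMod 2) = 0 then (3 : ℚ) else -1) = -1 + 2 * (1 + (-1) ^ n) := by
  rw [neg_one_zpow_eq_pow_val]
  rcases zmod_two_eq_zero_or_eq_one n with h | h <;> norm_num [h, ZMod.val_one]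

/-- Values of the rank-one Gauss sum over `ℤ/2ℤ` for
`M = ᵗX diag(u,1) X`, in terms of `Y = λ ᵗX` mod 2. -/
theorem statement_10 (u x : ℤ) (lam : Matrix (Fin 2) (Fin 2) ℤ) :
    ((∀ i j, (2 : ℤ) ∣ (lam * (Xmat x)ᵀ) i j) → gaussSumTwo u x lam = 3) ∧
    ((((lam * (Xmat x)ᵀ).map (Int.cast : ℤ → ZMod 2)).rank = 1 →
      ∀ t : ℤ, (∀ i, (2 : ℤ) ∣ ((lam * (Xmat x)ᵀ) i 1 - t * (lam * (Xmat x)ᵀ) i 0)) →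
        gaussSumTwo u x lam = -1 + 2 * (1 + (-1 : ℚ) ^ (u + t)))) ∧
    ((((lam * (Xmat x)ᵀ).map (Int.cast : ℤ → ZMod 2)).rank = 1 →
      (∀ i, (2 : ℤ) ∣ (lam * (Xmat x)ᵀ) i 0) → gaussSumTwo u x lam = -1)) ∧
    ((((lam * (Xmat x)ᵀ).map (Int.cast : ℤ → ZMod 2)).rank = 2 →
      gaussSumTwo u x lam = -1)) := by
  rw [gaussSumTwo_eq_ite]
  set A := (lam * (Xmat x)ᵀ).map (Int.cast : ℤ → ZMod 2)
  have hcast {n : ℤ} : (2 : ℤ) ∣ n ↔ (n : ZMod 2) = 0 := (ZMod.intCast_zmod_eq_zero_iff_dvd n 2).symm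
  have hA : A.rank = 1 → A ≠ 0 := fun hr h0 => by simp [h0] at hr
  refine ⟨fun h => ?_, fun hr t ht => ?_, fun hr h => ?_, fun hr => ?_⟩
  · have h0 : A = 0 := Matrix.ext fun i j => hcast.mp (h i j)
    norm_num [h0]
  · have hcol (i : Fin 2) : A i 1 = t * A i 0 := by
      have := hcast.mp (ht i)
      push_cast at this
      exact sub_eq_zero.mp this
    have hz : A *ᵥ ![(u : ZMod 2), 1] = 0 ↔ ((u + t : ℤ) : ZMod 2) = 0 := by
      rw [mulVec_vecCons_one_eq_smul_col _ _ hcol, smul_eq_zero,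
        or_iff_left (col_zero_ne_zero_of_col_one_eq_mul (hA hr) _ hcol), Int.cast_add]
    simp only [hz, ite_intCast_zmod_two_eq_zero]
  · exact if_neg (mulVec_vecCons_one_ne_zero_of_col_zero_eq_zero (hA hr) _ fun i => hcast.mp (h i))
  · refine if_neg fun h => ?_
    have := Matrix.mulVec_injective_of_rank_eq_card hr (h.trans (mulVec_zero A).symm)
    simp at this
end
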